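/- arXiv:1008.1575 — 10 statements merged into one kernel-verified Lean document; each statement's English description precedes it below -/
import Mathlib

section
/- Let X(t,x,a) be a smooth vector field on an open set M ⊆ ℝⁿ depending on parameters a = (a₁,…,a_k), and let I₁,…,I_k : ℝ × M × ℝᵏ → ℝ be smooth functions satisfying ∂I_i/∂t + X(I_i) = 0 (they are integrals of motion of dx/dt = X). Suppose Ĩ = (Ĩ₁,…,Ĩ_k) : ℝ × M × ℝᵏ → ℝᵏ is a smooth function satisfying the implicit equations I_i(t, x, Ĩ(t,x,b)) = b_i identically in (t,x,b), and that the k×k matrix (∂I_i/∂a_j) evaluated at a = Ĩ(t,x,b) is invertible for all (t,x,b). Define X̃(t,x,b) = X(t,x,Ĩ(t,x,b)). Then each Ĩ_j satisfies ∂Ĩ_j/∂t + X̃(Ĩ_j) = 0, i.e., the Ĩ_j are integrals of motion of the transformed system dx/dt = X̃. -/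
/-- the functions Ĩⱼ obtained by the generalized Stäckel transform are
integrals of motion of the transformed system `dx/dt = X̃`, where
`X̃ t x b = X t x (Ĩ t x b)`. -/
theorem stackel_transformed_integrals
    (n k : ℕ) (M : Set (Fin n → ℝ)) (hM : IsOpen M)
    (X : ℝ → (Fin n → ℝ) → (Fin k → ℝ) → (Fin n → ℝ))
    (I : Fin k → ℝ → (Fin n → ℝ) → (Fin k → ℝ) → ℝ)
    (It : Fin k → ℝ → (Fin n → ℝ) → (Fin k → ℝ) → ℝ)
    (hX : ContDiff ℝ (⊤ : ℕ∞) (fun p : ℝ × (Fin n → ℝ) × (Fin k → ℝ) => X p.1 p.2.1 p.2.2))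
    (hI : ∀ i, ContDiff ℝ (⊤ : ℕ∞) (fun p : ℝ × (Fin n → ℝ) × (Fin k → ℝ) => I i p.1 p.2.1 p.2.2))
    (hIt : ∀ i, ContDiff ℝ (⊤ : ℕ∞) (fun p : ℝ × (Fin n → ℝ) × (Fin k → ℝ) => It i p.1 p.2.1 p.2.2))
    -- the Iᵢ are integrals of motion of dx/dt = X :  ∂Iᵢ/∂t + X(Iᵢ) = 0
    (hint : ∀ i t, ∀ x ∈ M, ∀ a : Fin k → ℝ,
      deriv (fun s => I i s x a) t + fderiv ℝ (fun y => I i t y a) x (X t x a) = 0)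
    -- implicit equations  Iᵢ(t, x, Ĩ(t,x,b)) = bᵢ
    (himp : ∀ i t, ∀ x ∈ M, ∀ b : Fin k → ℝ,
      I i t x (fun l => It l t x b) = b i)
    -- invertibility of (∂Iᵢ/∂aⱼ) along a = Ĩ
    (hinv : ∀ t, ∀ x ∈ M, ∀ b : Fin k → ℝ,
      IsUnit (Matrix.of fun i j : Fin k =>
        fderiv ℝ (fun a => I i t x a) (fun l => It l t x b) (Pi.single j 1))) :
    -- conclusion: each Ĩⱼ is an integral of motion of dx/dt = X̃
    ∀ j t, ∀ x ∈ M, ∀ b : Fin k → ℝ,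
      deriv (fun s => It j s x b) t
        + fderiv ℝ (fun y => It j t y b) x (X t x (fun l => It l t x b)) = 0 := by
  intro j t x hx b
  set a : Fin k → ℝ := fun l => It l t x b with ha
  set v : Fin n → ℝ := X t x a with hv
  -- derivatives of the transformed functions Ĩ_l in (t,x) jointly
  have hψ : ∀ l, ContDiff ℝ (⊤ : ℕ∞) (fun p : ℝ × (Fin n → ℝ) => It l p.1 p.2 b) := by
    intro l
    exact (hIt l).comp (contDiff_fst.prodMk (contDiff_snd.prodMk contDiff_const))
  set Dψ : Fin k → (ℝ × (Fin n → ℝ)) →L[ℝ] ℝ :=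
    fun l => fderiv ℝ (fun p : ℝ × (Fin n → ℝ) => It l p.1 p.2 b) (t, x) with hDψ
  have hψd : ∀ l, HasFDerivAt (fun p : ℝ × (Fin n → ℝ) => It l p.1 p.2 b) (Dψ l) (t, x) :=
    fun l => (((hψ l).differentiable (by simp)) (t, x)).hasFDerivAt
  set c : Fin k → ℝ := fun l => Dψ l (1, v) with hc
  -- slice computation for Ĩ_l : deriv in t and fderiv in x from the joint derivative
  have slice_t : ∀ l, deriv (fun s => It l s x b) t = Dψ l (1, 0) := by
    intro l
    have h1 : HasDerivAt (fun s : ℝ => (s, x)) ((1 : ℝ), (0 : Fin n → ℝ)) t :=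
      (hasDerivAt_id t).prodMk (hasDerivAt_const t x)
    exact ((hψd l).comp_hasDerivAt t h1).deriv
  have slice_x : ∀ l, fderiv ℝ (fun y => It l t y b) x v = Dψ l (0, v) := by
    intro l
    have h1 : HasFDerivAt (fun y : Fin n → ℝ => (t, y))
        ((0 : (Fin n → ℝ) →L[ℝ] ℝ).prod (ContinuousLinearMap.id ℝ _)) x :=
      (hasFDerivAt_const t x).prodMk (hasFDerivAt_id x)
    have h2 : HasFDerivAt (fun y => It l t y b)
        ((Dψ l).comp ((0 : (Fin n → ℝ) →L[ℝ] ℝ).prod (ContinuousLinearMap.id ℝ _))) x :=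
      (hψd l).comp x h1
    rw [h2.fderiv]; rfl
  -- derivatives of the original integrals I_i at (t, x, a)
  set DI : Fin k → (ℝ × (Fin n → ℝ) × (Fin k → ℝ)) →L[ℝ] ℝ :=
    fun i => fderiv ℝ (fun p : ℝ × (Fin n → ℝ) × (Fin k → ℝ) => I i p.1 p.2.1 p.2.2) (t, x, a)
    with hDI
  have hId : ∀ i, HasFDerivAt (fun p : ℝ × (Fin n → ℝ) × (Fin k → ℝ) => I i p.1 p.2.1 p.2.2)
      (DI i) (t, x, a) := fun i => (((hI i).differentiable (by simp)) (t, x, a)).hasFDerivAt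
  have Islice_t : ∀ i, deriv (fun s => I i s x a) t = DI i (1, 0, 0) := by
    intro i
    have h1 : HasDerivAt (fun s : ℝ => (s, x, a))
        ((1 : ℝ), ((0 : Fin n → ℝ), (0 : Fin k → ℝ))) t :=
      (hasDerivAt_id t).prodMk (hasDerivAt_const t (x, a))
    exact ((hId i).comp_hasDerivAt t h1).deriv
  have Islice_x : ∀ i (w : Fin n → ℝ), fderiv ℝ (fun y => I i t y a) x w = DI i (0, w, 0) := by
    intro i w
    have h1 : HasFDerivAt (fun y : Fin n → ℝ => (t, y, a))
        ((0 : (Fin n → ℝ) →L[ℝ] ℝ).prod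
          ((ContinuousLinearMap.id ℝ _).prod (0 : (Fin n → ℝ) →L[ℝ] (Fin k → ℝ)))) x :=
      (hasFDerivAt_const t x).prodMk ((hasFDerivAt_id x).prodMk (hasFDerivAt_const a x))
    have h2 : HasFDerivAt (fun y => I i t y a)
        ((DI i).comp ((0 : (Fin n → ℝ) →L[ℝ] ℝ).prod
          ((ContinuousLinearMap.id ℝ _).prod (0 : (Fin n → ℝ) →L[ℝ] (Fin k → ℝ))))) x :=
      by have := (hId i).comp x h1; exact this
    rw [h2.fderiv]; rfl
  have Islice_a : ∀ i (w : Fin k → ℝ), fderiv ℝ (fun a' => I i t x a') a w = DI i (0, 0, w) := by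
    intro i w
    have h1 : HasFDerivAt (fun a' : Fin k → ℝ => (t, x, a'))
        ((0 : (Fin k → ℝ) →L[ℝ] ℝ).prod
          ((0 : (Fin k → ℝ) →L[ℝ] (Fin n → ℝ)).prod (ContinuousLinearMap.id ℝ _))) a :=
      (hasFDerivAt_const t a).prodMk ((hasFDerivAt_const x a).prodMk (hasFDerivAt_id a))
    have h2 : HasFDerivAt (fun a' => I i t x a')
        ((DI i).comp ((0 : (Fin k → ℝ) →L[ℝ] ℝ).prod
          ((0 : (Fin k → ℝ) →L[ℝ] (Fin n → ℝ)).prod (ContinuousLinearMap.id ℝ _)))) a :=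
      by have := (hId i).comp a h1; exact this
    rw [h2.fderiv]; rfl
  -- D_i (1, v, 0) = 0 from the integral-of-motion hypothesis
  have hint' : ∀ i, DI i (1, v, 0) = 0 := by
    intro i
    have := hint i t x hx a
    rw [Islice_t i, Islice_x i v] at this
    have e : ((1 : ℝ), v, (0 : Fin k → ℝ))
        = ((1 : ℝ), (0 : Fin n → ℝ), (0 : Fin k → ℝ)) + ((0 : ℝ), v, (0 : Fin k → ℝ)) := by
      simp [Prod.ext_iff]
    rw [e, map_add]
    exact this
  -- the joint map p ↦ (p.1, p.2, Ĩ(p)) and the chain rule on the implicit equations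
  set g : ℝ × (Fin n → ℝ) → Fin k → ℝ := fun p l => It l p.1 p.2 b with hg
  have hgd : HasFDerivAt g (ContinuousLinearMap.pi Dψ) (t, x) :=
    hasFDerivAt_pi.2 fun l => hψd l
  set L : (ℝ × (Fin n → ℝ)) →L[ℝ] ℝ × (Fin n → ℝ) × (Fin k → ℝ) :=
    (ContinuousLinearMap.fst ℝ ℝ (Fin n → ℝ)).prod
      ((ContinuousLinearMap.snd ℝ ℝ (Fin n → ℝ)).prod (ContinuousLinearMap.pi Dψ)) with hL
  have hHd : HasFDerivAt (fun p : ℝ × (Fin n → ℝ) => (p.1, p.2, g p)) L (t, x) :=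
    hasFDerivAt_fst.prodMk (hasFDerivAt_snd.prodMk hgd)
  have hFd : ∀ i, HasFDerivAt (fun p : ℝ × (Fin n → ℝ) => I i p.1 p.2 (g p))
      ((DI i).comp L) (t, x) := by
    intro i
    have := (hId i).comp (t, x) hHd
    exact this
  -- but this map is locally constant: its derivative vanishes
  have hzero : ∀ i, (DI i).comp L = 0 := by
    intro i
    have hev : (fun p : ℝ × (Fin n → ℝ) => I i p.1 p.2 (g p)) =ᶠ[nhds (t, x)]
        fun _ => b i := by
      have hmem : (Set.univ ×ˢ M : Set (ℝ × (Fin n → ℝ))) ∈ nhds (t, x) :=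
        (isOpen_univ.prod hM).mem_nhds (by exact ⟨trivial, hx⟩)
      filter_upwards [hmem] with p hp
      exact himp i p.1 p.2 hp.2 b
    have h0 : HasFDerivAt (fun p : ℝ × (Fin n → ℝ) => I i p.1 p.2 (g p))
        (0 : (ℝ × (Fin n → ℝ)) →L[ℝ] ℝ) (t, x) :=
      (hasFDerivAt_const (b i) (t, x)).congr_of_eventuallyEq hev
    exact (hFd i).unique h0
  -- evaluate at (1, v):  D_i (1, v, c) = 0
  have key : ∀ i, DI i (1, v, c) = 0 := by
    intro i
    have := congrArg (fun T : (ℝ × (Fin n → ℝ)) →L[ℝ] ℝ => T (1, v)) (hzero i)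
    simp only [ContinuousLinearMap.comp_apply, ContinuousLinearMap.zero_apply] at this
    have hLv : L ((1 : ℝ), v) = ((1 : ℝ), v, c) := rfl
    rw [hLv] at this
    exact this
  -- hence  M *ᵥ c = 0 where M is the Jacobian in the parameters
  set E : (Fin k → ℝ) →L[ℝ] ℝ × (Fin n → ℝ) × (Fin k → ℝ) :=
    (0 : (Fin k → ℝ) →L[ℝ] ℝ).prod
      ((0 : (Fin k → ℝ) →L[ℝ] (Fin n → ℝ)).prod (ContinuousLinearMap.id ℝ _)) with hE
  have hEapp : ∀ w : Fin k → ℝ, E w = ((0 : ℝ), (0 : Fin n → ℝ), w) := fun w => rfl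
  have hmvc : ∀ i, DI i (E c) = 0 := by
    intro i
    have e : ((1 : ℝ), v, c) = ((1 : ℝ), v, (0 : Fin k → ℝ)) + E c := by
      rw [hEapp]
      simp [Prod.ext_iff]
    have := key i
    rw [e, map_add, hint' i, zero_add] at this
    exact this
  set Mat : Matrix (Fin k) (Fin k) ℝ :=
    Matrix.of fun i l : Fin k => DI i (0, 0, (Pi.single l 1 : Fin k → ℝ)) with hMat
  have hsingle : ∀ l : Fin k, (fun j => if l = j then (1 : ℝ) else 0) = Pi.single l 1 := by
    intro l; funext m; simp [Pi.single_apply, eq_comm]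
  have hmul : Mat.mulVec c = 0 := by
    funext i
    have hsum := LinearMap.pi_apply_eq_sum_univ (((DI i).comp E).toLinearMap) c
    simp only [ContinuousLinearMap.coe_coe, ContinuousLinearMap.comp_apply] at hsum
    calc Mat.mulVec c i = ∑ l, Mat i l * c l := rfl
      _ = ∑ l, c l • DI i (E (fun j => if l = j then (1 : ℝ) else 0)) := by
          refine Finset.sum_congr rfl fun l _ => ?_
          rw [hsingle l, hEapp, smul_eq_mul, mul_comm]
          rfl
      _ = DI i (E c) := hsum.symm
      _ = 0 := hmvc i
  have hMatUnit : IsUnit Mat := by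
    have := hinv t x hx b
    have heq : (Matrix.of fun i l : Fin k =>
        fderiv ℝ (fun a' => I i t x a') (fun m => It m t x b) (Pi.single l 1)) = Mat := by
      funext i l
      exact Islice_a i (Pi.single l 1)
    rwa [heq] at this
  have hc0 : c = 0 := by
    have hinj := Matrix.mulVec_injective_iff_isUnit.2 hMatUnit
    have : Mat.mulVec c = Mat.mulVec 0 := by rw [hmul, Matrix.mulVec_zero]
    exact hinj this
  -- conclude
  have goal_eq : deriv (fun s => It j s x b) t
      + fderiv ℝ (fun y => It j t y b) x v = c j := by
    rw [slice_t j, slice_x j]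
    have e : ((1 : ℝ), v) = ((1 : ℝ), (0 : Fin n → ℝ)) + ((0 : ℝ), v) := by
      simp [Prod.ext_iff]
    rw [hc]
    show _ = Dψ j (1, v)
    rw [e, map_add]
  rw [goal_eq, hc0]
  rfl
end

section
/- With the setup of the generalized Stäckel transform (smooth vector field X(t,x,a) on M ⊆ ℝⁿ with integrals I₁,…,I_k satisfying ∂I_i/∂t + X(I_i) = 0, implicit solution a = Ĩ(t,x,b) of I_i(t,x,a) = b_i with (∂I_i/∂a_j) invertible along a = Ĩ, and X̃(t,x,b) = X(t,x,Ĩ(t,x,b))): if J : ℝ × M × ℝᵏ → ℝ is another smooth integral of motion of dx/dt = X (i.e. ∂J/∂t + X(J) = 0), then J̃(t,x,b) := J(t, x, Ĩ(t,x,b)) satisfies ∂J̃/∂t + X̃(J̃) = 0, i.e., J̃ is an integral of motion of the transformed system dx/dt = X̃. -/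
/-- if `J` is another integral of motion of `dx/dt = X`, then
`J̃(t,x,b) = J(t,x,Ĩ(t,x,b))` is an integral of motion of `dx/dt = X̃`. -/
theorem stackel_transforms_further_integrals
    (n k : ℕ) (M : Set (Fin n → ℝ)) (hM : IsOpen M)
    (X : ℝ → (Fin n → ℝ) → (Fin k → ℝ) → (Fin n → ℝ))
    (I : Fin k → ℝ → (Fin n → ℝ) → (Fin k → ℝ) → ℝ)
    (It : Fin k → ℝ → (Fin n → ℝ) → (Fin k → ℝ) → ℝ)
    (J : ℝ → (Fin n → ℝ) → (Fin k → ℝ) → ℝ)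
    (hX : ContDiff ℝ (⊤ : ℕ∞) (fun p : ℝ × (Fin n → ℝ) × (Fin k → ℝ) => X p.1 p.2.1 p.2.2))
    (hI : ∀ i, ContDiff ℝ (⊤ : ℕ∞) (fun p : ℝ × (Fin n → ℝ) × (Fin k → ℝ) => I i p.1 p.2.1 p.2.2))
    (hIt : ∀ i, ContDiff ℝ (⊤ : ℕ∞) (fun p : ℝ × (Fin n → ℝ) × (Fin k → ℝ) => It i p.1 p.2.1 p.2.2))
    (hJ : ContDiff ℝ (⊤ : ℕ∞) (fun p : ℝ × (Fin n → ℝ) × (Fin k → ℝ) => J p.1 p.2.1 p.2.2))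
    -- the Iᵢ are integrals of motion of dx/dt = X
    (hint : ∀ i t, ∀ x ∈ M, ∀ a : Fin k → ℝ,
      deriv (fun s => I i s x a) t + fderiv ℝ (fun y => I i t y a) x (X t x a) = 0)
    -- implicit equations  Iᵢ(t, x, Ĩ(t,x,b)) = bᵢ
    (himp : ∀ i t, ∀ x ∈ M, ∀ b : Fin k → ℝ,
      I i t x (fun l => It l t x b) = b i)
    -- invertibility of (∂Iᵢ/∂aⱼ) along a = Ĩ
    (hinv : ∀ t, ∀ x ∈ M, ∀ b : Fin k → ℝ,
      IsUnit (Matrix.of fun i j : Fin k =>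
        fderiv ℝ (fun a => I i t x a) (fun l => It l t x b) (Pi.single j 1)))
    -- J is an integral of motion of dx/dt = X
    (hJint : ∀ t, ∀ x ∈ M, ∀ a : Fin k → ℝ,
      deriv (fun s => J s x a) t + fderiv ℝ (fun y => J t y a) x (X t x a) = 0) :
    -- conclusion: J̃ is an integral of motion of dx/dt = X̃
    ∀ t, ∀ x ∈ M, ∀ b : Fin k → ℝ,
      deriv (fun s => J s x (fun l => It l s x b)) t
        + fderiv ℝ (fun y => J t y (fun l => It l t y b)) x
            (X t x (fun l => It l t x b)) = 0 := by
  intro t x hx b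
  classical
  set a0 : Fin k → ℝ := fun l => It l t x b with ha0
  set XX : Fin n → ℝ := X t x a0 with hXXdef
  -- the map g(s,y) = Ĩ(s,y,b)
  set g : ℝ × (Fin n → ℝ) → (Fin k → ℝ) :=
    fun q => fun l => It l q.1 q.2 b with hgdef
  have hgdiff : DifferentiableAt ℝ g (t, x) := by
    rw [hgdef, differentiableAt_pi]
    intro l
    have h1 : DifferentiableAt ℝ
        (fun p : ℝ × (Fin n → ℝ) × (Fin k → ℝ) => It l p.1 p.2.1 p.2.2) (t, x, b) :=
      ((hIt l).differentiable (by simp)).differentiableAt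
    have h2 : DifferentiableAt ℝ
        (fun q : ℝ × (Fin n → ℝ) => ((q.1, q.2, b) : ℝ × (Fin n → ℝ) × (Fin k → ℝ))) (t, x) :=
      DifferentiableAt.prodMk differentiableAt_fst (DifferentiableAt.prodMk differentiableAt_snd (differentiableAt_const b))
    exact h1.comp (t, x) h2
  set G := fderiv ℝ g (t, x) with hGdef
  have hgd : HasFDerivAt g G (t, x) := hgdiff.hasFDerivAt
  set w : Fin k → ℝ := G (1, XX) with hwdef
  -- P and its derivative
  set DP : (ℝ × (Fin n → ℝ)) →L[ℝ] (ℝ × (Fin n → ℝ) × (Fin k → ℝ)) :=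
    (ContinuousLinearMap.fst ℝ ℝ (Fin n → ℝ)).prod
      ((ContinuousLinearMap.snd ℝ ℝ (Fin n → ℝ)).prod G) with hDPdef
  have hPd : HasFDerivAt
      (fun q : ℝ × (Fin n → ℝ) => ((q.1, q.2, g q) : ℝ × (Fin n → ℝ) × (Fin k → ℝ)))
      DP (t, x) :=
    HasFDerivAt.prodMk hasFDerivAt_fst (HasFDerivAt.prodMk hasFDerivAt_snd hgd)
  have hDP1 : DP (1, XX) = (1, XX, w) := rfl
  -- key chain rule computation
  have key : ∀ f : ℝ → (Fin n → ℝ) → (Fin k → ℝ) → ℝ,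
      ContDiff ℝ (⊤ : ℕ∞) (fun p : ℝ × (Fin n → ℝ) × (Fin k → ℝ) => f p.1 p.2.1 p.2.2) →
      deriv (fun s => f s x (fun l => It l s x b)) t
        + fderiv ℝ (fun y => f t y (fun l => It l t y b)) x XX
      = fderiv ℝ (fun p : ℝ × (Fin n → ℝ) × (Fin k → ℝ) => f p.1 p.2.1 p.2.2) (t, x, a0)
          (1, XX, w) := by
    intro f hf
    set F : ℝ × (Fin n → ℝ) × (Fin k → ℝ) → ℝ := fun p => f p.1 p.2.1 p.2.2 with hFdef
    have hFd : HasFDerivAt F (fderiv ℝ F (t, x, a0)) (t, x, a0) :=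
      ((hf.differentiable (by simp)).differentiableAt).hasFDerivAt
    set DF := fderiv ℝ F (t, x, a0) with hDFdef
    have hFP : HasFDerivAt (fun q : ℝ × (Fin n → ℝ) => F (q.1, q.2, g q))
        (DF.comp DP) (t, x) := by have := hFd.comp (t, x) hPd; exact this
    have h1 : HasDerivAt (fun s : ℝ => F (s, x, g (s, x))) ((DF.comp DP) (1, 0)) t :=
      by have := hFP.comp_hasDerivAt t (HasDerivAt.prodMk (hasDerivAt_id t) (hasDerivAt_const t x)); exact this
    have h2 : HasFDerivAt (fun y : Fin n → ℝ => F (t, y, g (t, y)))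
        ((DF.comp DP).comp ((0 : (Fin n → ℝ) →L[ℝ] ℝ).prod
          (ContinuousLinearMap.id ℝ (Fin n → ℝ)))) x :=
      by have := hFP.comp x (HasFDerivAt.prodMk (hasFDerivAt_const t x) (hasFDerivAt_id x)); exact this
    have e1 : deriv (fun s => f s x (fun l => It l s x b)) t = DF (DP (1, 0)) := h1.deriv
    have e2 : fderiv ℝ (fun y => f t y (fun l => It l t y b)) x XX = DF (DP (0, XX)) := by
      rw [h2.fderiv]; rfl
    rw [e1, e2, ← hDP1, ← map_add, ← map_add]
    norm_num
  -- splitting the full derivative into partial derivatives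
  have split : ∀ f : ℝ → (Fin n → ℝ) → (Fin k → ℝ) → ℝ,
      ContDiff ℝ (⊤ : ℕ∞) (fun p : ℝ × (Fin n → ℝ) × (Fin k → ℝ) => f p.1 p.2.1 p.2.2) →
      fderiv ℝ (fun p : ℝ × (Fin n → ℝ) × (Fin k → ℝ) => f p.1 p.2.1 p.2.2) (t, x, a0)
          (1, XX, w)
      = (deriv (fun s => f s x a0) t + fderiv ℝ (fun y => f t y a0) x XX)
          + fderiv ℝ (fun a => f t x a) a0 w := by
    intro f hf
    set F : ℝ × (Fin n → ℝ) × (Fin k → ℝ) → ℝ := fun p => f p.1 p.2.1 p.2.2 with hFdef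
    have hFd : HasFDerivAt F (fderiv ℝ F (t, x, a0)) (t, x, a0) :=
      ((hf.differentiable (by simp)).differentiableAt).hasFDerivAt
    set DF := fderiv ℝ F (t, x, a0) with hDFdef
    have p1 : HasDerivAt (fun s : ℝ => F (s, x, a0)) (DF (1, 0)) t :=
      by have := hFd.comp_hasDerivAt t (HasDerivAt.prodMk (hasDerivAt_id t) (hasDerivAt_const t (x, a0))); exact this
    have p2 : HasFDerivAt (fun y : Fin n → ℝ => F (t, y, a0))
        (DF.comp ((0 : (Fin n → ℝ) →L[ℝ] ℝ).prod
          ((ContinuousLinearMap.id ℝ (Fin n → ℝ)).prod 0))) x :=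
      by have hin := (HasFDerivAt.prodMk (hasFDerivAt_const (𝕜 := ℝ) t x)
        (HasFDerivAt.prodMk (hasFDerivAt_id (𝕜 := ℝ) x) (hasFDerivAt_const (𝕜 := ℝ) a0 x))); exact hFd.comp x hin
    have p3 : HasFDerivAt (fun a : Fin k → ℝ => F (t, x, a))
        (DF.comp ((0 : (Fin k → ℝ) →L[ℝ] ℝ).prod
          ((0 : (Fin k → ℝ) →L[ℝ] (Fin n → ℝ)).prod
            (ContinuousLinearMap.id ℝ (Fin k → ℝ))))) a0 :=
      by have hin := (HasFDerivAt.prodMk (hasFDerivAt_const (𝕜 := ℝ) t a0)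
        (HasFDerivAt.prodMk (hasFDerivAt_const (𝕜 := ℝ) x a0) (hasFDerivAt_id (𝕜 := ℝ) a0))); exact hFd.comp a0 hin
    have e1 : deriv (fun s => f s x a0) t = DF (1, 0, 0) := p1.deriv
    have e2 : fderiv ℝ (fun y => f t y a0) x XX = DF (0, XX, 0) := by
      rw [p2.fderiv]; rfl
    have e3 : fderiv ℝ (fun a => f t x a) a0 w = DF (0, 0, w) := by
      rw [p3.fderiv]; rfl
    rw [e1, e2, e3, ← map_add, ← map_add]
    norm_num
  -- apply to the I i to show w = 0
  have hIw : ∀ i, fderiv ℝ (fun a => I i t x a) a0 w = 0 := by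
    intro i
    have hk := key (I i) (hI i)
    have hs := split (I i) (hI i)
    have hc1 : deriv (fun s => I i s x (fun l => It l s x b)) t = 0 := by
      have : (fun s => I i s x (fun l => It l s x b)) = fun _ => b i :=
        funext fun s => himp i s x hx b
      rw [this, deriv_const]
    have hc2 : fderiv ℝ (fun y => I i t y (fun l => It l t y b)) x = 0 := by
      have hev : (fun y => I i t y (fun l => It l t y b)) =ᶠ[nhds x] fun _ => b i :=
        Filter.eventuallyEq_of_mem (hM.mem_nhds hx) (fun y hy => himp i t y hy b)
      rw [hev.fderiv_eq, fderiv_fun_const]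
      rfl
    rw [hc1, hc2] at hk
    simp only [ContinuousLinearMap.zero_apply, add_zero, zero_add] at hk
    rw [hs, hint i t x hx a0, zero_add] at hk
    exact hk.symm
  have hw0 : w = 0 := by
    have hMu := hinv t x hx b
    have hmv : (Matrix.of fun i j : Fin k =>
        fderiv ℝ (fun a => I i t x a) a0 (Pi.single j 1)).mulVec w = 0 := by
      funext i
      simp only [Pi.zero_apply]
      have hrep : w = ∑ j, w j • (Pi.single j 1 : Fin k → ℝ) := by
        funext m
        simp [Finset.sum_apply, Pi.single_apply]
      calc (Matrix.of fun i j : Fin k =>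
            fderiv ℝ (fun a => I i t x a) a0 (Pi.single j 1)).mulVec w i
          = ∑ j, fderiv ℝ (fun a => I i t x a) a0 (Pi.single j 1) * w j := by
            simp [Matrix.mulVec, dotProduct]
        _ = fderiv ℝ (fun a => I i t x a) a0 (∑ j, w j • (Pi.single j 1 : Fin k → ℝ)) := by
            rw [map_sum]
            simp [mul_comm]
        _ = 0 := by rw [← hrep, hIw i]
    exact Matrix.mulVec_injective_iff_isUnit.2 hMu (by rw [hmv, Matrix.mulVec_zero])
  -- conclude for J
  rw [key J hJ, split J hJ, hJint t x hx a0, hw0, map_zero, add_zero]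
end

section
/- With the setup of the generalized Stäckel transform (vector field X(t,x,a), integrals I₁,…,I_k with ∂I_i/∂t + X(I_i) = 0, implicit solution a = Ĩ(t,x,b), invertibility of (∂I_i/∂a_j), X̃(t,x,b) = X(t,x,Ĩ(t,x,b))): let Y(t,x,a) be a smooth vector field on M that is a symmetry of X, i.e. ∂Y/∂t + [X,Y] = 0 (Lie bracket of vector fields on M for each fixed (t,a)), and suppose Y(I_j) = 0 for all j = 1,…,k. Then Ỹ(t,x,b) := Y(t,x,Ĩ(t,x,b)) is a symmetry of X̃, i.e. ∂Ỹ/∂t + [X̃,Ỹ] = 0, and moreover Ỹ(Ĩ_j) = 0 for all j. -/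
open scoped Topology

section helpers

variable {E₁ E₂ F : Type*} [NormedAddCommGroup E₁] [NormedSpace ℝ E₁]
  [NormedAddCommGroup E₂] [NormedSpace ℝ E₂]
  [NormedAddCommGroup F] [NormedSpace ℝ F]

lemma comp_partial (f : E₁ × E₂ → F) (g : E₁ → E₂) (x : E₁)
    (hf : DifferentiableAt ℝ f (x, g x)) (hg : DifferentiableAt ℝ g x) (v : E₁) :
    fderiv ℝ (fun y => f (y, g y)) x v
      = fderiv ℝ (fun y => f (y, g x)) x v
        + fderiv ℝ (fun a => f (x, a)) (g x) (fderiv ℝ g x v) := by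
  have hgp : HasFDerivAt (fun y => (y, g y))
      ((ContinuousLinearMap.id ℝ E₁).prod (fderiv ℝ g x)) x :=
    (hasFDerivAt_id x).prodMk hg.hasFDerivAt
  have h1 : fderiv ℝ (fun y => f (y, g y)) x v
      = fderiv ℝ f (x, g x) (v, fderiv ℝ g x v) := by
    have h := (hf.hasFDerivAt.comp x hgp).fderiv
    rw [show (fun y => f (y, g y)) = f ∘ (fun y => (y, g y)) from rfl, h]; rfl
  have h2 : fderiv ℝ (fun y => f (y, g x)) x v = fderiv ℝ f (x, g x) (v, 0) := by
    have hc : HasFDerivAt (fun y : E₁ => (y, g x))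
        ((ContinuousLinearMap.id ℝ E₁).prod 0) x :=
      (hasFDerivAt_id x).prodMk (hasFDerivAt_const _ _)
    have h := (hf.hasFDerivAt.comp x hc).fderiv
    rw [show (fun y => f (y, g x)) = f ∘ (fun y => (y, g x)) from rfl, h]; rfl
  have h3 : fderiv ℝ (fun a => f (x, a)) (g x) (fderiv ℝ g x v)
      = fderiv ℝ f (x, g x) (0, fderiv ℝ g x v) := by
    have hc : HasFDerivAt (fun a : E₂ => (x, a))
        ((0 : E₂ →L[ℝ] E₁).prod (ContinuousLinearMap.id ℝ E₂)) (g x) :=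
      (hasFDerivAt_const _ _).prodMk (hasFDerivAt_id _)
    have h := (hf.hasFDerivAt.comp (g x) hc).fderiv
    rw [show (fun a : E₂ => f (x, a)) = f ∘ (fun a => (x, a)) from rfl, h]; rfl
  rw [h1, h2, h3, ← map_add]
  congr 1
  simp [Prod.ext_iff]

end helpers

section setup

variable {n k : ℕ} {F : Type*} [NormedAddCommGroup F] [NormedSpace ℝ F]

/-- differentiability of the pair map in (x,a) -/
lemma diffXA (f : ℝ → (Fin n → ℝ) → (Fin k → ℝ) → F)
    (hf : ContDiff ℝ (⊤ : ℕ∞) (fun p : ℝ × (Fin n → ℝ) × (Fin k → ℝ) => f p.1 p.2.1 p.2.2))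
    (t : ℝ) :
    Differentiable ℝ (fun p : (Fin n → ℝ) × (Fin k → ℝ) => f t p.1 p.2) :=
  (hf.comp (contDiff_const.prodMk contDiff_id)).differentiable (by simp)

lemma diffTA (f : ℝ → (Fin n → ℝ) → (Fin k → ℝ) → F)
    (hf : ContDiff ℝ (⊤ : ℕ∞) (fun p : ℝ × (Fin n → ℝ) × (Fin k → ℝ) => f p.1 p.2.1 p.2.2))
    (x : Fin n → ℝ) :
    Differentiable ℝ (fun q : ℝ × (Fin k → ℝ) => f q.1 x q.2) :=
  (hf.comp (contDiff_fst.prodMk (contDiff_const.prodMk contDiff_snd))).differentiable (by simp)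

lemma diffItx (It : Fin k → ℝ → (Fin n → ℝ) → (Fin k → ℝ) → ℝ)
    (hIt : ∀ i, ContDiff ℝ (⊤ : ℕ∞) (fun p : ℝ × (Fin n → ℝ) × (Fin k → ℝ) => It i p.1 p.2.1 p.2.2))
    (t : ℝ) (b : Fin k → ℝ) (l : Fin k) :
    Differentiable ℝ (fun y : Fin n → ℝ => It l t y b) := by
  have h := ((hIt l).comp
    ((contDiff_const : ContDiff ℝ (⊤ : ℕ∞) fun _ : Fin n → ℝ => t).prodMk
      (contDiff_id.prodMk (contDiff_const : ContDiff ℝ (⊤ : ℕ∞) fun _ : Fin n → ℝ => b)))).differentiable (by simp)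
  exact h

lemma diffJx (It : Fin k → ℝ → (Fin n → ℝ) → (Fin k → ℝ) → ℝ)
    (hIt : ∀ i, ContDiff ℝ (⊤ : ℕ∞) (fun p : ℝ × (Fin n → ℝ) × (Fin k → ℝ) => It i p.1 p.2.1 p.2.2))
    (t : ℝ) (b : Fin k → ℝ) :
    Differentiable ℝ (fun y : Fin n → ℝ => fun l => It l t y b) := by
  rw [differentiable_pi]
  exact diffItx It hIt t b

lemma diffJt (It : Fin k → ℝ → (Fin n → ℝ) → (Fin k → ℝ) → ℝ)
    (hIt : ∀ i, ContDiff ℝ (⊤ : ℕ∞) (fun p : ℝ × (Fin n → ℝ) × (Fin k → ℝ) => It i p.1 p.2.1 p.2.2))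
    (x : Fin n → ℝ) (b : Fin k → ℝ) :
    Differentiable ℝ (fun s : ℝ => fun l => It l s x b) := by
  rw [differentiable_pi]
  intro l
  have h := ((hIt l).comp
    (contDiff_id.prodMk (contDiff_const : ContDiff ℝ (⊤ : ℕ∞) fun _ : ℝ => (x, b)))).differentiable (by simp)
  exact h

/-- coordinates of the derivative of Ĩ in x -/
lemma fderivJx_apply (It : Fin k → ℝ → (Fin n → ℝ) → (Fin k → ℝ) → ℝ)
    (hIt : ∀ i, ContDiff ℝ (⊤ : ℕ∞) (fun p : ℝ × (Fin n → ℝ) × (Fin k → ℝ) => It i p.1 p.2.1 p.2.2))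
    (t : ℝ) (b : Fin k → ℝ) (x v : Fin n → ℝ) (j : Fin k) :
    fderiv ℝ (fun y : Fin n → ℝ => fun l => It l t y b) x v j
      = fderiv ℝ (fun y => It j t y b) x v := by
  rw [fderiv_pi (fun l => (diffItx It hIt t b l).differentiableAt)]
  rfl

/-- chain rule in x for the substituted field -/
lemma chain_x (f : ℝ → (Fin n → ℝ) → (Fin k → ℝ) → F)
    (hf : ContDiff ℝ (⊤ : ℕ∞) (fun p : ℝ × (Fin n → ℝ) × (Fin k → ℝ) => f p.1 p.2.1 p.2.2))
    (It : Fin k → ℝ → (Fin n → ℝ) → (Fin k → ℝ) → ℝ)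
    (hIt : ∀ i, ContDiff ℝ (⊤ : ℕ∞) (fun p : ℝ × (Fin n → ℝ) × (Fin k → ℝ) => It i p.1 p.2.1 p.2.2))
    (t : ℝ) (b : Fin k → ℝ) (x v : Fin n → ℝ) :
    fderiv ℝ (fun y => f t y (fun l => It l t y b)) x v
      = fderiv ℝ (fun y => f t y (fun l => It l t x b)) x v
        + fderiv ℝ (fun a => f t x a) (fun l => It l t x b)
            (fderiv ℝ (fun y : Fin n → ℝ => fun l => It l t y b) x v) :=
  comp_partial (fun p : (Fin n → ℝ) × (Fin k → ℝ) => f t p.1 p.2)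
    (fun y => fun l => It l t y b) x ((diffXA f hf t) _) ((diffJx It hIt t b) x) v

/-- chain rule in t for the substituted field -/
lemma chain_t (f : ℝ → (Fin n → ℝ) → (Fin k → ℝ) → F)
    (hf : ContDiff ℝ (⊤ : ℕ∞) (fun p : ℝ × (Fin n → ℝ) × (Fin k → ℝ) => f p.1 p.2.1 p.2.2))
    (It : Fin k → ℝ → (Fin n → ℝ) → (Fin k → ℝ) → ℝ)
    (hIt : ∀ i, ContDiff ℝ (⊤ : ℕ∞) (fun p : ℝ × (Fin n → ℝ) × (Fin k → ℝ) => It i p.1 p.2.1 p.2.2))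
    (x : Fin n → ℝ) (b : Fin k → ℝ) (t : ℝ) :
    deriv (fun s => f s x (fun l => It l s x b)) t
      = deriv (fun s => f s x (fun l => It l t x b)) t
        + fderiv ℝ (fun a => f t x a) (fun l => It l t x b)
            (fderiv ℝ (fun s : ℝ => fun l => It l s x b) t 1) := by
  rw [← fderiv_apply_one_eq_deriv, ← fderiv_apply_one_eq_deriv]
  exact comp_partial (fun q : ℝ × (Fin k → ℝ) => f q.1 x q.2)
    (fun s => fun l => It l s x b) t ((diffTA f hf x) _) ((diffJt It hIt x b) t) 1

end setup

/-- a symmetry `Y` of `X` (∂Y/∂t + [X,Y] = 0) annihilating the generating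
integrals (`Y(Iⱼ) = 0`) transforms into a symmetry `Ỹ` of `X̃`, and `Ỹ(Ĩⱼ) = 0`. -/
theorem stackel_transforms_symmetries
    (n k : ℕ) (M : Set (Fin n → ℝ)) (hM : IsOpen M)
    (X Y : ℝ → (Fin n → ℝ) → (Fin k → ℝ) → (Fin n → ℝ))
    (I : Fin k → ℝ → (Fin n → ℝ) → (Fin k → ℝ) → ℝ)
    (It : Fin k → ℝ → (Fin n → ℝ) → (Fin k → ℝ) → ℝ)
    (hX : ContDiff ℝ (⊤ : ℕ∞) (fun p : ℝ × (Fin n → ℝ) × (Fin k → ℝ) => X p.1 p.2.1 p.2.2))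
    (hY : ContDiff ℝ (⊤ : ℕ∞) (fun p : ℝ × (Fin n → ℝ) × (Fin k → ℝ) => Y p.1 p.2.1 p.2.2))
    (hI : ∀ i, ContDiff ℝ (⊤ : ℕ∞) (fun p : ℝ × (Fin n → ℝ) × (Fin k → ℝ) => I i p.1 p.2.1 p.2.2))
    (hIt : ∀ i, ContDiff ℝ (⊤ : ℕ∞) (fun p : ℝ × (Fin n → ℝ) × (Fin k → ℝ) => It i p.1 p.2.1 p.2.2))
    -- the Iᵢ are integrals of motion of dx/dt = X
    (hint : ∀ i t, ∀ x ∈ M, ∀ a : Fin k → ℝ,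
      deriv (fun s => I i s x a) t + fderiv ℝ (fun y => I i t y a) x (X t x a) = 0)
    -- implicit equations Iᵢ(t,x,Ĩ(t,x,b)) = bᵢ
    (himp : ∀ i t, ∀ x ∈ M, ∀ b : Fin k → ℝ,
      I i t x (fun l => It l t x b) = b i)
    -- invertibility of (∂Iᵢ/∂aⱼ) along a = Ĩ
    (hinv : ∀ t, ∀ x ∈ M, ∀ b : Fin k → ℝ,
      IsUnit (Matrix.of fun i j : Fin k =>
        fderiv ℝ (fun a => I i t x a) (fun l => It l t x b) (Pi.single j 1)))
    -- Y is a symmetry of X: ∂Y/∂t + [X,Y] = 0, with [X,Y] = X(Y) − Y(X)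
    (hsym : ∀ t, ∀ x ∈ M, ∀ a : Fin k → ℝ,
      deriv (fun s => Y s x a) t
        + (fderiv ℝ (fun y => Y t y a) x (X t x a)
            - fderiv ℝ (fun y => X t y a) x (Y t x a)) = 0)
    -- Y annihilates the generating integrals: Y(Iⱼ) = 0
    (hYI : ∀ j t, ∀ x ∈ M, ∀ a : Fin k → ℝ,
      fderiv ℝ (fun y => I j t y a) x (Y t x a) = 0) :
    -- conclusion: Ỹ is a symmetry of X̃ and Ỹ(Ĩⱼ) = 0
    (∀ t, ∀ x ∈ M, ∀ b : Fin k → ℝ,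
      deriv (fun s => Y s x (fun l => It l s x b)) t
        + (fderiv ℝ (fun y => Y t y (fun l => It l t y b)) x
              (X t x (fun l => It l t x b))
            - fderiv ℝ (fun y => X t y (fun l => It l t y b)) x
              (Y t x (fun l => It l t x b))) = 0)
    ∧ (∀ j t, ∀ x ∈ M, ∀ b : Fin k → ℝ,
        fderiv ℝ (fun y => It j t y b) x (Y t x (fun l => It l t x b)) = 0) := by
  
  have key : ∀ t, ∀ x ∈ M, ∀ b : Fin k → ℝ,
      fderiv ℝ (fun y : Fin n → ℝ => fun l => It l t y b) x (Y t x (fun l => It l t x b)) = 0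
      ∧ fderiv ℝ (fun s : ℝ => fun l => It l s x b) t 1
          + fderiv ℝ (fun y : Fin n → ℝ => fun l => It l t y b) x (X t x (fun l => It l t x b))
          = 0 := by
    intro t x hx b
    have hinj := Matrix.mulVec_injective_iff_isUnit.mpr (hinv t x hx b)
    have hrep : ∀ (i : Fin k) (w : Fin k → ℝ),
        fderiv ℝ (fun a => I i t x a) (fun l => It l t x b) w
          = (Matrix.of fun i j : Fin k =>
              fderiv ℝ (fun a => I i t x a) (fun l => It l t x b) (Pi.single j 1)).mulVec w i := by
      intro i w
      have h := ((fderiv ℝ (fun a => I i t x a) (fun l => It l t x b)).toLinearMap).pi_apply_eq_sum_univ w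
      simp only [ContinuousLinearMap.coe_coe] at h
      simp only [Matrix.mulVec, dotProduct, Matrix.of_apply]
      rw [h]
      refine Finset.sum_congr rfl fun j _ => ?_
      rw [smul_eq_mul, mul_comm]
      congr 1
      congr 1
      funext m
      simp [Pi.single_apply, eq_comm]
    have hzero : ∀ w : Fin k → ℝ,
        (∀ i, fderiv ℝ (fun a => I i t x a) (fun l => It l t x b) w = 0) → w = 0 := by
      intro w hw
      refine hinj (show _ = (Matrix.of fun i j : Fin k =>
          fderiv ℝ (fun a => I i t x a) (fun l => It l t x b) (Pi.single j 1)).mulVec 0 from ?_)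
      rw [Matrix.mulVec_zero]
      funext i
      rw [← hrep i w]
      exact hw i
    have hC1 : ∀ (i : Fin k) (v : Fin n → ℝ),
        fderiv ℝ (fun y => I i t y (fun l => It l t x b)) x v
          + fderiv ℝ (fun a => I i t x a) (fun l => It l t x b)
              (fderiv ℝ (fun y : Fin n → ℝ => fun l => It l t y b) x v) = 0 := by
      intro i v
      have hchain := chain_x (I i) (hI i) It hIt t b x v
      have hev : (fun y => I i t y (fun l => It l t y b)) =ᶠ[𝓝 x] fun _ => b i :=
        Filter.eventuallyEq_of_mem (hM.mem_nhds hx) (fun y hy => himp i t y hy b)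
      have hconst : fderiv ℝ (fun y => I i t y (fun l => It l t y b)) x = 0 := by
        rw [hev.fderiv_eq]
        exact fderiv_const_apply _
      rw [← hchain, hconst]
      rfl
    have hC2 : ∀ i : Fin k,
        deriv (fun s => I i s x (fun l => It l t x b)) t
          + fderiv ℝ (fun a => I i t x a) (fun l => It l t x b)
              (fderiv ℝ (fun s : ℝ => fun l => It l s x b) t 1) = 0 := by
      intro i
      have hchain := chain_t (I i) (hI i) It hIt x b t
      have hconst : (fun s => I i s x (fun l => It l s x b)) = fun _ => b i :=
        funext fun s => himp i s x hx b
      rw [hconst, deriv_const] at hchain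
      linarith
    constructor
    · refine hzero _ fun i => ?_
      have h1 := hC1 i (Y t x (fun l => It l t x b))
      have h2 := hYI i t x hx (fun l => It l t x b)
      linarith
    · refine hzero _ fun i => ?_
      rw [map_add]
      have h1 := hC1 i (X t x (fun l => It l t x b))
      have h2 := hC2 i
      have h3 := hint i t x hx (fun l => It l t x b)
      linarith
  refine ⟨?_, ?_⟩
  · intro t x hx b
    obtain ⟨hw0, hu⟩ := key t x hx b
    have e1 := chain_t Y hY It hIt x b t
    have e2 := chain_x Y hY It hIt t b x (X t x (fun l => It l t x b))
    have e3 := chain_x X hX It hIt t b x (Y t x (fun l => It l t x b))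
    rw [e1, e2, e3, hw0]
    have hmap : fderiv ℝ (fun a => Y t x a) (fun l => It l t x b)
          (fderiv ℝ (fun s : ℝ => fun l => It l s x b) t 1)
        + fderiv ℝ (fun a => Y t x a) (fun l => It l t x b)
          (fderiv ℝ (fun y : Fin n → ℝ => fun l => It l t y b) x
            (X t x (fun l => It l t x b))) = 0 := by
      rw [← map_add, hu, map_zero]
    have hs := hsym t x hx (fun l => It l t x b)
    rw [map_zero]
    linear_combination hs + hmap
  · intro j t x hx b
    have h := (key t x hx b).1
    rw [← fderivJx_apply It hIt t b x (Y t x (fun l => It l t x b)) j, h]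
    rfl
end

section
/- With the setup of the generalized Stäckel transform: if Y₁ and Y₂ are smooth parameter-dependent vector fields on M satisfying Y_p(I_j) = 0 for p = 1,2 and all j = 1,…,k, then the commutator of the transformed fields equals the transform of the commutator: [Ỹ₁, Ỹ₂] = ([Y₁,Y₂])|_{a = Ĩ}, where Ỹ_p(t,x,b) = Y_p(t,x,Ĩ(t,x,b)). -/
private lemma fderiv_comp_partial
    {E A F : Type*} [NormedAddCommGroup E] [NormedSpace ℝ E]
    [NormedAddCommGroup A] [NormedSpace ℝ A]
    [NormedAddCommGroup F] [NormedSpace ℝ F]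
    (G : E → A → F) (g : E → A) (x : E) (Dg : E →L[ℝ] A) (v : E)
    (hG : DifferentiableAt ℝ (fun p : E × A => G p.1 p.2) (x, g x))
    (hg : HasFDerivAt g Dg x) (hv : Dg v = 0) :
    fderiv ℝ (fun y => G y (g y)) x v = fderiv ℝ (fun y => G y (g x)) x v := by
  have hG' : HasFDerivAt (fun p : E × A => G p.1 p.2)
      (fderiv ℝ (fun p : E × A => G p.1 p.2) (x, g x)) (x, g x) := hG.hasFDerivAt
  have h1 : HasFDerivAt (fun y => G y (g y))
      ((fderiv ℝ (fun p : E × A => G p.1 p.2) (x, g x)).comp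
        ((ContinuousLinearMap.id ℝ E).prod Dg)) x :=
    hG'.comp (f := fun y => (y, g y)) x (HasFDerivAt.prodMk (hasFDerivAt_id x) hg)
  have h2 : HasFDerivAt (fun y => G y (g x))
      ((fderiv ℝ (fun p : E × A => G p.1 p.2) (x, g x)).comp
        ((ContinuousLinearMap.id ℝ E).prod 0)) x :=
    hG'.comp (f := fun y => (y, g x)) x (HasFDerivAt.prodMk (hasFDerivAt_id x) (hasFDerivAt_const _ _))
  rw [h1.fderiv, h2.fderiv]
  simp [hv]



/-- if `Y₁(Iⱼ) = Y₂(Iⱼ) = 0` for all j, then the commutator of the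
transformed vector fields equals the transform of the commutator:
`[Ỹ₁,Ỹ₂] = ([Y₁,Y₂])|_{a = Ĩ}`. -/
theorem stackel_commutator_preserved
    (n k : ℕ) (M : Set (Fin n → ℝ)) (hM : IsOpen M)
    (X Y₁ Y₂ : ℝ → (Fin n → ℝ) → (Fin k → ℝ) → (Fin n → ℝ))
    (I : Fin k → ℝ → (Fin n → ℝ) → (Fin k → ℝ) → ℝ)
    (It : Fin k → ℝ → (Fin n → ℝ) → (Fin k → ℝ) → ℝ)
    (hX : ContDiff ℝ (⊤ : ℕ∞) (fun p : ℝ × (Fin n → ℝ) × (Fin k → ℝ) => X p.1 p.2.1 p.2.2))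
    (hY₁ : ContDiff ℝ (⊤ : ℕ∞) (fun p : ℝ × (Fin n → ℝ) × (Fin k → ℝ) => Y₁ p.1 p.2.1 p.2.2))
    (hY₂ : ContDiff ℝ (⊤ : ℕ∞) (fun p : ℝ × (Fin n → ℝ) × (Fin k → ℝ) => Y₂ p.1 p.2.1 p.2.2))
    (hI : ∀ i, ContDiff ℝ (⊤ : ℕ∞) (fun p : ℝ × (Fin n → ℝ) × (Fin k → ℝ) => I i p.1 p.2.1 p.2.2))
    (hIt : ∀ i, ContDiff ℝ (⊤ : ℕ∞) (fun p : ℝ × (Fin n → ℝ) × (Fin k → ℝ) => It i p.1 p.2.1 p.2.2))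
    -- the Iᵢ are integrals of motion of dx/dt = X
    (hint : ∀ i t, ∀ x ∈ M, ∀ a : Fin k → ℝ,
      deriv (fun s => I i s x a) t + fderiv ℝ (fun y => I i t y a) x (X t x a) = 0)
    -- implicit equations Iᵢ(t,x,Ĩ(t,x,b)) = bᵢ
    (himp : ∀ i t, ∀ x ∈ M, ∀ b : Fin k → ℝ,
      I i t x (fun l => It l t x b) = b i)
    -- invertibility of (∂Iᵢ/∂aⱼ) along a = Ĩ
    (hinv : ∀ t, ∀ x ∈ M, ∀ b : Fin k → ℝ,
      IsUnit (Matrix.of fun i j : Fin k =>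
        fderiv ℝ (fun a => I i t x a) (fun l => It l t x b) (Pi.single j 1)))
    -- Y₁(Iⱼ) = 0 and Y₂(Iⱼ) = 0
    (hY₁I : ∀ j t, ∀ x ∈ M, ∀ a : Fin k → ℝ,
      fderiv ℝ (fun y => I j t y a) x (Y₁ t x a) = 0)
    (hY₂I : ∀ j t, ∀ x ∈ M, ∀ a : Fin k → ℝ,
      fderiv ℝ (fun y => I j t y a) x (Y₂ t x a) = 0) :
    -- conclusion: [Ỹ₁,Ỹ₂] = ([Y₁,Y₂])|_{a=Ĩ}
    ∀ t, ∀ x ∈ M, ∀ b : Fin k → ℝ,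
      fderiv ℝ (fun y => Y₂ t y (fun l => It l t y b)) x
          (Y₁ t x (fun l => It l t x b))
        - fderiv ℝ (fun y => Y₁ t y (fun l => It l t y b)) x
          (Y₂ t x (fun l => It l t x b))
      = fderiv ℝ (fun y => Y₂ t y (fun l => It l t x b)) x
          (Y₁ t x (fun l => It l t x b))
        - fderiv ℝ (fun y => Y₁ t y (fun l => It l t x b)) x
          (Y₂ t x (fun l => It l t x b)) := by
  intro t x hx b
  -- the transform map g : y ↦ Ĩ(t,y,b) is differentiable
  have hgdiff : DifferentiableAt ℝ (fun y (l : Fin k) => It l t y b) x := by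
    apply differentiableAt_pi.2
    intro l
    have : ContDiff ℝ (⊤ : ℕ∞) (fun y : Fin n → ℝ => It l t y b) :=
      (hIt l).comp (contDiff_const.prodMk (contDiff_id.prodMk contDiff_const))
    exact (this.differentiable (by simp)).differentiableAt
  obtain ⟨Dg, hg⟩ := hgdiff
  -- any vector killed by all ∂ₓI j (at a = Ĩ) is killed by Dg
  have hker : ∀ v : Fin n → ℝ,
      (∀ i, fderiv ℝ (fun y => I i t y (fun l => It l t x b)) x v = 0) → Dg v = 0 := by
    intro v hv
    have hIw : ∀ i, fderiv ℝ (fun a => I i t x a) (fun l => It l t x b) (Dg v) = 0 := by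
      intro i
      have hGi : DifferentiableAt ℝ
          (fun p : (Fin n → ℝ) × (Fin k → ℝ) => I i t p.1 p.2)
          (x, fun l => It l t x b) := by
        have : ContDiff ℝ (⊤ : ℕ∞) (fun p : (Fin n → ℝ) × (Fin k → ℝ) => I i t p.1 p.2) :=
          (hI i).comp (contDiff_const.prodMk contDiff_id)
        exact (this.differentiable (by simp)).differentiableAt
      have hL : HasFDerivAt (fun p : (Fin n → ℝ) × (Fin k → ℝ) => I i t p.1 p.2)
          (fderiv ℝ (fun p : (Fin n → ℝ) × (Fin k → ℝ) => I i t p.1 p.2)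
            (x, fun l => It l t x b)) (x, fun l => It l t x b) := hGi.hasFDerivAt
      set L := fderiv ℝ (fun p : (Fin n → ℝ) × (Fin k → ℝ) => I i t p.1 p.2)
        (x, fun l => It l t x b) with hLdef
      have h1 : HasFDerivAt (fun y => I i t y (fun l => It l t y b))
          (L.comp ((ContinuousLinearMap.id ℝ _).prod Dg)) x :=
        hL.comp (f := fun y => (y, fun l => It l t y b)) x (HasFDerivAt.prodMk (hasFDerivAt_id x) hg)
      have hzero : fderiv ℝ (fun y => I i t y (fun l => It l t y b)) x = 0 := by
        have heq : (fun y => I i t y (fun l => It l t y b)) =ᶠ[nhds x]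
            (fun _ => b i) := by
          filter_upwards [hM.mem_nhds hx] with y hy
          exact himp i t y hy b
        rw [heq.fderiv_eq]
        exact fderiv_const_apply _
      have e1 : L (v, Dg v) = 0 := by
        have h1f := h1.fderiv
        rw [hzero] at h1f
        have := congrArg (fun (T : (Fin n → ℝ) →L[ℝ] ℝ) => T v) h1f
        simpa using this.symm
      have h2 : HasFDerivAt (fun y => I i t y (fun l => It l t x b))
          (L.comp ((ContinuousLinearMap.id ℝ _).prod 0)) x :=
        hL.comp (f := fun y => (y, fun l => It l t x b)) x (HasFDerivAt.prodMk (hasFDerivAt_id x) (hasFDerivAt_const _ _))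
      have e2 : L (v, 0) = 0 := by
        have h2f := h2.fderiv
        have := hv i
        rw [h2f] at this
        simpa using this
      have h3 : HasFDerivAt (fun a => I i t x a)
          (L.comp ((0 : (Fin k → ℝ) →L[ℝ] (Fin n → ℝ)).prod
            (ContinuousLinearMap.id ℝ _))) (fun l => It l t x b) :=
        hL.comp (f := fun a => (x, a)) _ (HasFDerivAt.prodMk (hasFDerivAt_const _ _) (hasFDerivAt_id _))
      have e3 : fderiv ℝ (fun a => I i t x a) (fun l => It l t x b) (Dg v)
          = L (0, Dg v) := by
        rw [h3.fderiv]; simp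
      rw [e3]
      have hsplit : ((0 : Fin n → ℝ), Dg v) = (v, Dg v) - (v, (0 : Fin k → ℝ)) := by
        simp [Prod.ext_iff]
      rw [hsplit, map_sub, e1, e2, sub_zero]
    -- invertibility forces Dg v = 0
    have hA := hinv t x hx b
    have hmul : (Matrix.of fun i j : Fin k =>
        fderiv ℝ (fun a => I i t x a) (fun l => It l t x b) (Pi.single j 1)).mulVec
          (Dg v) = 0 := by
      funext i
      have hwexp : Dg v = ∑ j, (Dg v) j • (Pi.single j 1 : Fin k → ℝ) := by
        funext m
        simp [Finset.sum_apply, Pi.single_apply]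
      have hval : fderiv ℝ (fun a => I i t x a) (fun l => It l t x b) (Dg v)
          = ∑ j, (Dg v) j *
            fderiv ℝ (fun a => I i t x a) (fun l => It l t x b) (Pi.single j 1) := by
        conv_lhs => rw [hwexp]
        rw [map_sum]
        simp [smul_eq_mul]
      simp only [Matrix.mulVec, Matrix.of_apply, dotProduct, Pi.zero_apply]
      rw [Finset.sum_congr rfl (fun j _ => mul_comm _ _), ← hval, hIw i]
    have hdet : IsUnit (Matrix.of fun i j : Fin k =>
        fderiv ℝ (fun a => I i t x a) (fun l => It l t x b) (Pi.single j 1)).det :=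
      (Matrix.isUnit_iff_isUnit_det _).mp hA
    calc Dg v = (1 : Matrix (Fin k) (Fin k) ℝ).mulVec (Dg v) :=
          (Matrix.one_mulVec _).symm
      _ = ((Matrix.of fun i j : Fin k =>
            fderiv ℝ (fun a => I i t x a) (fun l => It l t x b) (Pi.single j 1))⁻¹ *
            (Matrix.of fun i j : Fin k =>
            fderiv ℝ (fun a => I i t x a) (fun l => It l t x b)
              (Pi.single j 1))).mulVec (Dg v) := by
          rw [Matrix.nonsing_inv_mul _ hdet]
      _ = 0 := by rw [← Matrix.mulVec_mulVec, hmul, Matrix.mulVec_zero]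
  -- Dg kills both Y₁ and Y₂
  have hv₁ : Dg (Y₁ t x (fun l => It l t x b)) = 0 :=
    hker _ (fun i => hY₁I i t x hx _)
  have hv₂ : Dg (Y₂ t x (fun l => It l t x b)) = 0 :=
    hker _ (fun i => hY₂I i t x hx _)
  have hGY₂ : DifferentiableAt ℝ
      (fun p : (Fin n → ℝ) × (Fin k → ℝ) => Y₂ t p.1 p.2) (x, fun l => It l t x b) := by
    have : ContDiff ℝ (⊤ : ℕ∞) (fun p : (Fin n → ℝ) × (Fin k → ℝ) => Y₂ t p.1 p.2) :=
      hY₂.comp (contDiff_const.prodMk contDiff_id)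
    exact (this.differentiable (by simp)).differentiableAt
  have hGY₁ : DifferentiableAt ℝ
      (fun p : (Fin n → ℝ) × (Fin k → ℝ) => Y₁ t p.1 p.2) (x, fun l => It l t x b) := by
    have : ContDiff ℝ (⊤ : ℕ∞) (fun p : (Fin n → ℝ) × (Fin k → ℝ) => Y₁ t p.1 p.2) :=
      hY₁.comp (contDiff_const.prodMk contDiff_id)
    exact (this.differentiable (by simp)).differentiableAt
  have e1 : fderiv ℝ (fun y => Y₂ t y (fun l => It l t y b)) x
        (Y₁ t x (fun l => It l t x b))
      = fderiv ℝ (fun y => Y₂ t y (fun l => It l t x b)) x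
        (Y₁ t x (fun l => It l t x b)) :=
    fderiv_comp_partial (fun y a => Y₂ t y a) (fun y l => It l t y b) x Dg
      (Y₁ t x (fun l => It l t x b)) hGY₂ hg hv₁
  have e2 : fderiv ℝ (fun y => Y₁ t y (fun l => It l t y b)) x
        (Y₂ t x (fun l => It l t x b))
      = fderiv ℝ (fun y => Y₁ t y (fun l => It l t x b)) x
        (Y₂ t x (fun l => It l t x b)) :=
    fderiv_comp_partial (fun y a => Y₁ t y a) (fun y l => It l t y b) x Dg
      (Y₂ t x (fun l => It l t x b)) hGY₁ hg hv₂
  rw [e1, e2]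
end

section
/- With the setup of the generalized Stäckel transform: suppose Y₁,…,Y_s are parameter-dependent vector fields on M with Y_p(I_j) = 0 for all p, j, and suppose there are smooth functions c^g_{pq}(a, u, v) such that [Y_p, Y_q] = Σ_g c^g_{pq}(a, I₁,…,I_k, J₁,…,J_m) Y_g for all p,q, where J₁,…,J_m are further integrals of X. Then [Ỹ_p, Ỹ_q] = Σ_g c̃^g_{pq} Ỹ_g where c̃^g_{pq}(t,x,b) = c^g_{pq}(Ĩ(t,x,b), b₁,…,b_k, J̃₁(t,x,b),…,J̃_m(t,x,b)). In particular, if the c^g_{pq} are constants, the transformed fields Ỹ_g satisfy the same commutation relations [Ỹ_p,Ỹ_q] = Σ_g c^g_{pq} Ỹ_g. -/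
lemma fderiv_partial_aux
    {E F G : Type*} [NormedAddCommGroup E] [NormedSpace ℝ E]
    [NormedAddCommGroup F] [NormedSpace ℝ F] [NormedAddCommGroup G] [NormedSpace ℝ G]
    (f : E × F → G) (φ : E → F) (x : E)
    (hf : DifferentiableAt ℝ f (x, φ x)) (hφ : DifferentiableAt ℝ φ x) (v : E) :
    fderiv ℝ (fun y => f (y, φ y)) x v
      = fderiv ℝ (fun y => f (y, φ x)) x v
        + fderiv ℝ (fun a => f (x, a)) (φ x) (fderiv ℝ φ x v) := by
  have h1 : HasFDerivAt (fun y => (y, φ y))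
      ((ContinuousLinearMap.id ℝ E).prod (fderiv ℝ φ x)) x :=
    (hasFDerivAt_id x).prodMk hφ.hasFDerivAt
  have h2 : HasFDerivAt (fun y => f (y, φ y))
      ((fderiv ℝ f (x, φ x)).comp
        ((ContinuousLinearMap.id ℝ E).prod (fderiv ℝ φ x))) x :=
    hf.hasFDerivAt.comp x h1
  have h3 : HasFDerivAt (fun y => f (y, φ x))
      ((fderiv ℝ f (x, φ x)).comp
        ((ContinuousLinearMap.id ℝ E).prod 0)) x :=
    hf.hasFDerivAt.comp x ((hasFDerivAt_id x).prodMk (hasFDerivAt_const (φ x) x))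
  have h4 : HasFDerivAt (fun a => f (x, a))
      ((fderiv ℝ f (x, φ x)).comp
        ((0 : F →L[ℝ] E).prod (ContinuousLinearMap.id ℝ F))) (φ x) :=
    hf.hasFDerivAt.comp (φ x) ((hasFDerivAt_const x (φ x)).prodMk (hasFDerivAt_id (φ x)))
  rw [h2.fderiv, h3.fderiv, h4.fderiv]
  simp only [ContinuousLinearMap.comp_apply, ContinuousLinearMap.prod_apply,
    ContinuousLinearMap.id_apply, ContinuousLinearMap.zero_apply, ← map_add,
    Prod.mk_add_mk, add_zero, zero_add]

/-- if the symmetries `Y₁,…,Y_s` span an involutive distribution with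
structure functions `c^g_{pq}(a, I, J)` and annihilate the generating integrals, then the
transformed fields satisfy `[Ỹ_p,Ỹ_q] = Σ_g c̃^g_{pq} Ỹ_g` with
`c̃^g_{pq} = c^g_{pq}(Ĩ, b, J̃)`. -/
theorem stackel_involutive_distribution
    (n k m s : ℕ) (M : Set (Fin n → ℝ)) (hM : IsOpen M)
    (X : ℝ → (Fin n → ℝ) → (Fin k → ℝ) → (Fin n → ℝ))
    (Y : Fin s → ℝ → (Fin n → ℝ) → (Fin k → ℝ) → (Fin n → ℝ))
    (I : Fin k → ℝ → (Fin n → ℝ) → (Fin k → ℝ) → ℝ)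
    (It : Fin k → ℝ → (Fin n → ℝ) → (Fin k → ℝ) → ℝ)
    (J : Fin m → ℝ → (Fin n → ℝ) → (Fin k → ℝ) → ℝ)
    (c : Fin s → Fin s → Fin s → (Fin k → ℝ) → (Fin k → ℝ) → (Fin m → ℝ) → ℝ)
    (hX : ContDiff ℝ (⊤ : ℕ∞) (fun p : ℝ × (Fin n → ℝ) × (Fin k → ℝ) => X p.1 p.2.1 p.2.2))
    (hY : ∀ g, ContDiff ℝ (⊤ : ℕ∞) (fun p : ℝ × (Fin n → ℝ) × (Fin k → ℝ) => Y g p.1 p.2.1 p.2.2))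
    (hI : ∀ i, ContDiff ℝ (⊤ : ℕ∞) (fun p : ℝ × (Fin n → ℝ) × (Fin k → ℝ) => I i p.1 p.2.1 p.2.2))
    (hIt : ∀ i, ContDiff ℝ (⊤ : ℕ∞) (fun p : ℝ × (Fin n → ℝ) × (Fin k → ℝ) => It i p.1 p.2.1 p.2.2))
    (hJ : ∀ r, ContDiff ℝ (⊤ : ℕ∞) (fun p : ℝ × (Fin n → ℝ) × (Fin k → ℝ) => J r p.1 p.2.1 p.2.2))
    -- the Iᵢ are integrals of motion of dx/dt = X
    (hint : ∀ i t, ∀ x ∈ M, ∀ a : Fin k → ℝ,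
      deriv (fun u => I i u x a) t + fderiv ℝ (fun y => I i t y a) x (X t x a) = 0)
    -- the J_r are further integrals of motion of dx/dt = X
    (hJint : ∀ r t, ∀ x ∈ M, ∀ a : Fin k → ℝ,
      deriv (fun u => J r u x a) t + fderiv ℝ (fun y => J r t y a) x (X t x a) = 0)
    -- implicit equations Iᵢ(t,x,Ĩ(t,x,b)) = bᵢ
    (himp : ∀ i t, ∀ x ∈ M, ∀ b : Fin k → ℝ,
      I i t x (fun l => It l t x b) = b i)
    -- invertibility of (∂Iᵢ/∂aⱼ) along a = Ĩ
    (hinv : ∀ t, ∀ x ∈ M, ∀ b : Fin k → ℝ,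
      IsUnit (Matrix.of fun i j : Fin k =>
        fderiv ℝ (fun a => I i t x a) (fun l => It l t x b) (Pi.single j 1)))
    -- each Y_p annihilates the generating integrals
    (hYI : ∀ p j t, ∀ x ∈ M, ∀ a : Fin k → ℝ,
      fderiv ℝ (fun y => I j t y a) x (Y p t x a) = 0)
    -- involutivity: [Y_p,Y_q] = Σ_g c^g_{pq}(a, I, J) Y_g
    (hinvol : ∀ p q t, ∀ x ∈ M, ∀ a : Fin k → ℝ,
      fderiv ℝ (fun y => Y q t y a) x (Y p t x a)
        - fderiv ℝ (fun y => Y p t y a) x (Y q t x a)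
      = ∑ g, c g p q a (fun i => I i t x a) (fun r => J r t x a) • Y g t x a) :
    -- conclusion: [Ỹ_p,Ỹ_q] = Σ_g c^g_{pq}(Ĩ, b, J̃) Ỹ_g
    ∀ p q t, ∀ x ∈ M, ∀ b : Fin k → ℝ,
      fderiv ℝ (fun y => Y q t y (fun l => It l t y b)) x
          (Y p t x (fun l => It l t x b))
        - fderiv ℝ (fun y => Y p t y (fun l => It l t y b)) x
          (Y q t x (fun l => It l t x b))
      = ∑ g, c g p q (fun l => It l t x b) b
            (fun r => J r t x (fun l => It l t x b))
          • Y g t x (fun l => It l t x b) := by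
  intro p q t x hx b
  -- the substitution map Φ y = Ĩ(t,y,b)
  set Φ : (Fin n → ℝ) → (Fin k → ℝ) := fun y l => It l t y b with hΦdef
  have hΦ : ContDiff ℝ (⊤ : ℕ∞) Φ :=
    contDiff_pi.mpr fun l =>
      (hIt l).comp (contDiff_const.prodMk (contDiff_id.prodMk contDiff_const))
  have hΦx : DifferentiableAt ℝ Φ x := (hΦ.differentiable (by simp)) x
  have hpair : ContDiff ℝ (⊤ : ℕ∞)
      (fun p : (Fin n → ℝ) × (Fin k → ℝ) => (t, p.1, p.2)) :=
    contDiff_const.prodMk contDiff_id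
  have hYd : ∀ g, DifferentiableAt ℝ
      (fun p : (Fin n → ℝ) × (Fin k → ℝ) => Y g t p.1 p.2) (x, Φ x) :=
    fun g => (((hY g).comp hpair).differentiable (by simp)) (x, Φ x)
  have hId : ∀ i, DifferentiableAt ℝ
      (fun p : (Fin n → ℝ) × (Fin k → ℝ) => I i t p.1 p.2) (x, Φ x) :=
    fun i => (((hI i).comp hpair).differentiable (by simp)) (x, Φ x)
  -- key: DΦ kills the transformed symmetry vectors
  have key : ∀ p', fderiv ℝ Φ x (Y p' t x (Φ x)) = 0 := by
    intro p'
    set v := Y p' t x (Φ x) with hv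
    set w := fderiv ℝ Φ x v with hwdef
    have hA : ∀ i, fderiv ℝ (fun a => I i t x a) (Φ x) w = 0 := by
      intro i
      have hconst : (fun y => I i t y (Φ y)) =ᶠ[nhds x] fun _ => b i := by
        filter_upwards [hM.mem_nhds hx] with y hy
        exact himp i t y hy b
      have h0 : fderiv ℝ (fun y => I i t y (Φ y)) x v = 0 := by
        rw [hconst.fderiv_eq]; simp
      have hchain := fderiv_partial_aux
        (fun p : (Fin n → ℝ) × (Fin k → ℝ) => I i t p.1 p.2) Φ x (hId i) hΦx v
      rw [h0, hYI p' i t x hx (Φ x)] at hchain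
      rw [zero_add] at hchain
      exact hchain.symm
    -- matrix argument
    set A := Matrix.of fun i j : Fin k =>
      fderiv ℝ (fun a => I i t x a) (fun l => It l t x b) (Pi.single j 1) with hAdef
    have hw : w = ∑ j, w j • (Pi.single j 1 : Fin k → ℝ) := by
      funext l
      simp only [Finset.sum_apply, Pi.smul_apply, Pi.single_apply, smul_eq_mul,
        mul_ite, mul_one, mul_zero, Finset.sum_ite_eq, Finset.mem_univ, if_true]
    have hmul : A.mulVec w = 0 := by
      funext i
      have := hA i
      rw [hw] at this
      simp only [map_sum, map_smul] at this
      simpa [Matrix.mulVec, dotProduct, hAdef, mul_comm, Φ] using this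
    have hU := hinv t x hx b
    calc w = (1 : Matrix (Fin k) (Fin k) ℝ).mulVec w := (Matrix.one_mulVec w).symm
      _ = ((↑hU.unit⁻¹ : Matrix (Fin k) (Fin k) ℝ) * A).mulVec w := by
          rw [hU.val_inv_mul]
      _ = (↑hU.unit⁻¹ : Matrix (Fin k) (Fin k) ℝ).mulVec (A.mulVec w) :=
          (Matrix.mulVec_mulVec _ _ _).symm
      _ = 0 := by rw [hmul]; simp
  -- chain rule for each symmetry field
  have hch : ∀ g p', fderiv ℝ (fun y => Y g t y (Φ y)) x (Y p' t x (Φ x))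
      = fderiv ℝ (fun y => Y g t y (Φ x)) x (Y p' t x (Φ x)) := by
    intro g p'
    have := fderiv_partial_aux
      (fun p : (Fin n → ℝ) × (Fin k → ℝ) => Y g t p.1 p.2) Φ x (hYd g) hΦx
      (Y p' t x (Φ x))
    rw [key p'] at this
    simpa using this
  have hmain := hinvol p q t x hx (Φ x)
  have hb : (fun i => I i t x (Φ x)) = b := funext fun i => himp i t x hx b
  rw [hb] at hmain
  calc fderiv ℝ (fun y => Y q t y (Φ y)) x (Y p t x (Φ x))
        - fderiv ℝ (fun y => Y p t y (Φ y)) x (Y q t x (Φ x))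
      = fderiv ℝ (fun y => Y q t y (Φ x)) x (Y p t x (Φ x))
        - fderiv ℝ (fun y => Y p t y (Φ x)) x (Y q t x (Φ x)) := by
        rw [hch q p, hch p q]
    _ = _ := hmain
end

section
/- Preservation of Lax representations: let L, M : ℝ × M × ℝᵏ × ℝ → Mat(N,ℝ) be smooth matrix-valued functions of (t, x, a, λ), and suppose the dynamical system dx/dt = X(t,x,a) admits the Lax representation ∂L/∂t + X(L) = [M, L] (matrix commutator), identically in (t,x,a,λ). Under the setup of the generalized Stäckel transform (integrals I₁,…,I_k of X with a = Ĩ(t,x,b) the implicit solution of I(t,x,a)=b, and X̃(t,x,b)=X(t,x,Ĩ(t,x,b))), define L̃(t,x,b,λ) = L(t,x,Ĩ(t,x,b),λ) and M̃(t,x,b,λ) = M(t,x,Ĩ(t,x,b),λ). Then ∂L̃/∂t + X̃(L̃) = [M̃, L̃]. -/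
open ContinuousLinearMap

section helpers
variable {E F G : Type*} [NormedAddCommGroup E] [NormedSpace ℝ E]
  [NormedAddCommGroup F] [NormedSpace ℝ F] [NormedAddCommGroup G] [NormedSpace ℝ G]

lemma my_partial2_t (f : ℝ × E → ℝ) (t : ℝ) (x : E)
    (hf : DifferentiableAt ℝ f (t, x)) :
    deriv (fun s => f (s, x)) t = fderiv ℝ f (t, x) (1, 0) := by
  have hc : HasDerivAt (fun s : ℝ => (s, x)) ((1 : ℝ), (0 : E)) t :=
    HasDerivAt.prodMk (hasDerivAt_id t) (hasDerivAt_const t x)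
  exact (hf.hasFDerivAt.comp_hasDerivAt t hc).deriv

lemma my_partial2_x (f : ℝ × E → ℝ) (t : ℝ) (x : E) (v : E)
    (hf : DifferentiableAt ℝ f (t, x)) :
    fderiv ℝ (fun y => f (t, y)) x v = fderiv ℝ f (t, x) (0, v) := by
  have hm : HasFDerivAt (fun y : E => ((t : ℝ), y))
      ((0 : E →L[ℝ] ℝ).prod (ContinuousLinearMap.id ℝ E)) x :=
    HasFDerivAt.prodMk (hasFDerivAt_const t x) (hasFDerivAt_id x)
  have h : HasFDerivAt (fun y => f (t, y))
      ((fderiv ℝ f (t, x)).comp ((0 : E →L[ℝ] ℝ).prod (ContinuousLinearMap.id ℝ E))) x :=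
    hf.hasFDerivAt.comp x hm
  rw [h.fderiv]; rfl

lemma my_partial3_t (f : ℝ × E × F → ℝ) (t : ℝ) (x : E) (a : F)
    (hf : DifferentiableAt ℝ f (t, x, a)) :
    deriv (fun s => f (s, x, a)) t = fderiv ℝ f (t, x, a) (1, 0, 0) := by
  have hc : HasDerivAt (fun s : ℝ => (s, x, a)) ((1 : ℝ), (0 : E), (0 : F)) t :=
    HasDerivAt.prodMk (hasDerivAt_id t) (HasDerivAt.prodMk (hasDerivAt_const t x) (hasDerivAt_const t a))
  exact (hf.hasFDerivAt.comp_hasDerivAt t hc).deriv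

lemma my_partial3_x (f : ℝ × E × F → ℝ) (t : ℝ) (x : E) (a : F) (v : E)
    (hf : DifferentiableAt ℝ f (t, x, a)) :
    fderiv ℝ (fun y => f (t, y, a)) x v = fderiv ℝ f (t, x, a) (0, v, 0) := by
  have hm : HasFDerivAt (fun y : E => ((t : ℝ), y, a))
      ((0 : E →L[ℝ] ℝ).prod ((ContinuousLinearMap.id ℝ E).prod (0 : E →L[ℝ] F))) x :=
    HasFDerivAt.prodMk (hasFDerivAt_const t x) (HasFDerivAt.prodMk (hasFDerivAt_id x) (hasFDerivAt_const a x))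
  have h : HasFDerivAt (fun y => f (t, y, a))
      ((fderiv ℝ f (t, x, a)).comp
        ((0 : E →L[ℝ] ℝ).prod ((ContinuousLinearMap.id ℝ E).prod (0 : E →L[ℝ] F)))) x :=
    hf.hasFDerivAt.comp x hm
  rw [h.fderiv]; rfl

lemma my_partial3_a (f : ℝ × E × F → ℝ) (t : ℝ) (x : E) (a : F) (w : F)
    (hf : DifferentiableAt ℝ f (t, x, a)) :
    fderiv ℝ (fun c => f (t, x, c)) a w = fderiv ℝ f (t, x, a) (0, 0, w) := by
  have hm : HasFDerivAt (fun c : F => ((t : ℝ), x, c))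
      ((0 : F →L[ℝ] ℝ).prod ((0 : F →L[ℝ] E).prod (ContinuousLinearMap.id ℝ F))) a :=
    HasFDerivAt.prodMk (hasFDerivAt_const t a) (HasFDerivAt.prodMk (hasFDerivAt_const x a) (hasFDerivAt_id a))
  have h : HasFDerivAt (fun c => f (t, x, c))
      ((fderiv ℝ f (t, x, a)).comp
        ((0 : F →L[ℝ] ℝ).prod ((0 : F →L[ℝ] E).prod (ContinuousLinearMap.id ℝ F)))) a :=
    hf.hasFDerivAt.comp a hm
  rw [h.fderiv]; rfl

lemma my_partial4_t (f : (ℝ × E × F) × G → ℝ) (t : ℝ) (x : E) (a : F) (g : G)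
    (hf : DifferentiableAt ℝ f ((t, x, a), g)) :
    deriv (fun s => f ((s, x, a), g)) t = fderiv ℝ f ((t, x, a), g) ((1, 0, 0), 0) := by
  have hc : HasDerivAt (fun s : ℝ => ((s, x, a), g)) (((1 : ℝ), (0 : E), (0 : F)), (0 : G)) t :=
    HasDerivAt.prodMk (HasDerivAt.prodMk (hasDerivAt_id t) (HasDerivAt.prodMk (hasDerivAt_const t x) (hasDerivAt_const t a)))
      (hasDerivAt_const t g)
  exact (hf.hasFDerivAt.comp_hasDerivAt t hc).deriv

lemma my_partial4_x (f : (ℝ × E × F) × G → ℝ) (t : ℝ) (x : E) (a : F) (g : G) (v : E)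
    (hf : DifferentiableAt ℝ f ((t, x, a), g)) :
    fderiv ℝ (fun y => f ((t, y, a), g)) x v = fderiv ℝ f ((t, x, a), g) ((0, v, 0), 0) := by
  have hm : HasFDerivAt (fun y : E => (((t : ℝ), y, a), g))
      (((0 : E →L[ℝ] ℝ).prod ((ContinuousLinearMap.id ℝ E).prod (0 : E →L[ℝ] F))).prod
        (0 : E →L[ℝ] G)) x :=
    HasFDerivAt.prodMk (HasFDerivAt.prodMk (hasFDerivAt_const t x) (HasFDerivAt.prodMk (hasFDerivAt_id x) (hasFDerivAt_const a x)))
      (hasFDerivAt_const g x)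
  have h : HasFDerivAt (fun y => f ((t, y, a), g))
      ((fderiv ℝ f ((t, x, a), g)).comp
        (((0 : E →L[ℝ] ℝ).prod ((ContinuousLinearMap.id ℝ E).prod (0 : E →L[ℝ] F))).prod
          (0 : E →L[ℝ] G))) x :=
    hf.hasFDerivAt.comp x hm
  rw [h.fderiv]; rfl

end helpers

/-- preservation of Lax representations.  If `∂L/∂t + X(L) = [M,L]`
(entrywise, with matrix commutator on the right), then the substituted matrices
`L̃, M̃` (with `a = Ĩ(t,x,b)`) satisfy `∂L̃/∂t + X̃(L̃) = [M̃,L̃]`. -/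
theorem stackel_preserves_lax
    (n k N : ℕ) (M : Set (Fin n → ℝ)) (hM : IsOpen M)
    (X : ℝ → (Fin n → ℝ) → (Fin k → ℝ) → (Fin n → ℝ))
    (I : Fin k → ℝ → (Fin n → ℝ) → (Fin k → ℝ) → ℝ)
    (It : Fin k → ℝ → (Fin n → ℝ) → (Fin k → ℝ) → ℝ)
    (L Mm : Fin N → Fin N → ℝ → (Fin n → ℝ) → (Fin k → ℝ) → ℝ → ℝ)
    (hX : ContDiff ℝ (⊤ : ℕ∞) (fun p : ℝ × (Fin n → ℝ) × (Fin k → ℝ) => X p.1 p.2.1 p.2.2))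
    (hI : ∀ i, ContDiff ℝ (⊤ : ℕ∞) (fun p : ℝ × (Fin n → ℝ) × (Fin k → ℝ) => I i p.1 p.2.1 p.2.2))
    (hIt : ∀ i, ContDiff ℝ (⊤ : ℕ∞) (fun p : ℝ × (Fin n → ℝ) × (Fin k → ℝ) => It i p.1 p.2.1 p.2.2))
    (hL : ∀ i j, ContDiff ℝ (⊤ : ℕ∞)
      (fun p : (ℝ × (Fin n → ℝ) × (Fin k → ℝ)) × ℝ => L i j p.1.1 p.1.2.1 p.1.2.2 p.2))
    (hMm : ∀ i j, ContDiff ℝ (⊤ : ℕ∞)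
      (fun p : (ℝ × (Fin n → ℝ) × (Fin k → ℝ)) × ℝ => Mm i j p.1.1 p.1.2.1 p.1.2.2 p.2))
    -- the Iᵢ are integrals of motion of dx/dt = X
    (hint : ∀ i t, ∀ x ∈ M, ∀ a : Fin k → ℝ,
      deriv (fun s => I i s x a) t + fderiv ℝ (fun y => I i t y a) x (X t x a) = 0)
    -- implicit equations Iᵢ(t,x,Ĩ(t,x,b)) = bᵢ
    (himp : ∀ i t, ∀ x ∈ M, ∀ b : Fin k → ℝ,
      I i t x (fun l => It l t x b) = b i)
    -- invertibility of (∂Iᵢ/∂aⱼ) along a = Ĩ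
    (hinv : ∀ t, ∀ x ∈ M, ∀ b : Fin k → ℝ,
      IsUnit (Matrix.of fun i j : Fin k =>
        fderiv ℝ (fun a => I i t x a) (fun l => It l t x b) (Pi.single j 1)))
    -- Lax representation ∂L/∂t + X(L) = [M,L] entrywise, identically in (t,x,a,λ)
    (hlax : ∀ i j t, ∀ x ∈ M, ∀ a : Fin k → ℝ, ∀ lam : ℝ,
      deriv (fun s => L i j s x a lam) t
        + fderiv ℝ (fun y => L i j t y a lam) x (X t x a)
      = ∑ l, (Mm i l t x a lam * L l j t x a lam - L i l t x a lam * Mm l j t x a lam)) :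
    -- conclusion: ∂L̃/∂t + X̃(L̃) = [M̃,L̃]
    ∀ i j t, ∀ x ∈ M, ∀ b : Fin k → ℝ, ∀ lam : ℝ,
      deriv (fun s => L i j s x (fun l => It l s x b) lam) t
        + fderiv ℝ (fun y => L i j t y (fun l => It l t y b) lam) x
            (X t x (fun l => It l t x b))
      = ∑ l, (Mm i l t x (fun l' => It l' t x b) lam * L l j t x (fun l' => It l' t x b) lam
            - L i l t x (fun l' => It l' t x b) lam * Mm l j t x (fun l' => It l' t x b) lam) := by
  intro i j t x hx b lam
  classical
  set a : Fin k → ℝ := fun l => It l t x b with ha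
  -- differentiability of the substituted integrals (as functions of (t,x))
  have hItd : ∀ l, DifferentiableAt ℝ (fun p : ℝ × (Fin n → ℝ) => It l p.1 p.2 b) (t, x) := by
    intro l
    have h1 : DifferentiableAt ℝ
        (fun p : ℝ × (Fin n → ℝ) × (Fin k → ℝ) => It l p.1 p.2.1 p.2.2) (t, x, b) :=
      ((hIt l).differentiable (by simp)) _
    have h2 : DifferentiableAt ℝ (fun p : ℝ × (Fin n → ℝ) => (p.1, p.2, b)) (t, x) := by
      fun_prop
    exact h1.comp (t, x) h2
  -- the derivative of p ↦ (p.1, p.2, Ĩ(p)) at (t,x)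
  set W : (ℝ × (Fin n → ℝ)) →L[ℝ] (Fin k → ℝ) :=
    ContinuousLinearMap.pi
      (fun l => fderiv ℝ (fun p : ℝ × (Fin n → ℝ) => It l p.1 p.2 b) (t, x)) with hWdef
  have hW : HasFDerivAt (fun p : ℝ × (Fin n → ℝ) => fun l => It l p.1 p.2 b) W (t, x) :=
    hasFDerivAt_pi.2 fun l => (hItd l).hasFDerivAt
  set DG2 : (ℝ × (Fin n → ℝ)) →L[ℝ] ℝ × (Fin n → ℝ) × (Fin k → ℝ) :=
    (ContinuousLinearMap.fst ℝ ℝ (Fin n → ℝ)).prod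
      ((ContinuousLinearMap.snd ℝ ℝ (Fin n → ℝ)).prod W) with hDG2def
  have hG2 : HasFDerivAt (fun p : ℝ × (Fin n → ℝ) => (p.1, p.2, fun l => It l p.1 p.2 b))
      DG2 (t, x) := HasFDerivAt.prodMk hasFDerivAt_fst (HasFDerivAt.prodMk hasFDerivAt_snd hW)
  set w' : Fin k → ℝ :=
    fun l => fderiv ℝ (fun p : ℝ × (Fin n → ℝ) => It l p.1 p.2 b) (t, x) (1, X t x a)
    with hw'def
  have hDG2v : DG2 ((1 : ℝ), X t x a) = ((1 : ℝ), X t x a, w') := rfl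
  -- the substituted integrals are constant near (t,x)
  have hIconst : ∀ i', fderiv ℝ
      (fun p : ℝ × (Fin n → ℝ) => I i' p.1 p.2 (fun l => It l p.1 p.2 b)) (t, x) = 0 := by
    intro i'
    have hmem : {p : ℝ × (Fin n → ℝ) | p.2 ∈ M} ∈ nhds (t, x) :=
      (hM.preimage continuous_snd).mem_nhds hx
    have hev : (fun p : ℝ × (Fin n → ℝ) => I i' p.1 p.2 (fun l => It l p.1 p.2 b))
        =ᶠ[nhds (t, x)] (fun _ => b i') := by
      filter_upwards [hmem] with p hp
      exact himp i' p.1 p.2 hp b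
    rw [hev.fderiv_eq]
    exact fderiv_const_apply _
  have hΨd : ∀ i', DifferentiableAt ℝ
      (fun p : ℝ × (Fin n → ℝ) × (Fin k → ℝ) => I i' p.1 p.2.1 p.2.2) (t, x, a) :=
    fun i' => ((hI i').differentiable (by simp)) _
  -- chain rule for the implicit identity
  have hchain : ∀ i',
      fderiv ℝ (fun p : ℝ × (Fin n → ℝ) × (Fin k → ℝ) => I i' p.1 p.2.1 p.2.2) (t, x, a)
        ((1 : ℝ), X t x a, w') = 0 := by
    intro i'
    have hcomp : HasFDerivAt
        (fun p : ℝ × (Fin n → ℝ) => I i' p.1 p.2 (fun l => It l p.1 p.2 b))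
        ((fderiv ℝ (fun p : ℝ × (Fin n → ℝ) × (Fin k → ℝ) => I i' p.1 p.2.1 p.2.2)
            (t, x, a)).comp DG2) (t, x) :=
      by have := (hΨd i').hasFDerivAt.comp (t, x) hG2; exact this
    have h0 := hcomp.fderiv
    rw [hIconst i'] at h0
    have h1 := congrArg (fun T : (ℝ × (Fin n → ℝ)) →L[ℝ] ℝ => T ((1 : ℝ), X t x a)) h0.symm
    simpa [hDG2v] using h1
  -- split the total derivative of I into partials and use `hint`
  have hIa0 : ∀ i',
      fderiv ℝ (fun p : ℝ × (Fin n → ℝ) × (Fin k → ℝ) => I i' p.1 p.2.1 p.2.2) (t, x, a)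
        ((0 : ℝ), (0 : Fin n → ℝ), w') = 0 := by
    intro i'
    have h3t : deriv (fun s => I i' s x a) t
        = fderiv ℝ (fun p : ℝ × (Fin n → ℝ) × (Fin k → ℝ) => I i' p.1 p.2.1 p.2.2) (t, x, a)
          ((1 : ℝ), (0 : Fin n → ℝ), (0 : Fin k → ℝ)) :=
      my_partial3_t _ t x a (hΨd i')
    have h3x : fderiv ℝ (fun y => I i' t y a) x (X t x a)
        = fderiv ℝ (fun p : ℝ × (Fin n → ℝ) × (Fin k → ℝ) => I i' p.1 p.2.1 p.2.2) (t, x, a)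
          ((0 : ℝ), X t x a, (0 : Fin k → ℝ)) :=
      my_partial3_x _ t x a (X t x a) (hΨd i')
    have hdecomp : ((1 : ℝ), X t x a, w')
        = (((1 : ℝ), (0 : Fin n → ℝ), (0 : Fin k → ℝ)) + ((0 : ℝ), X t x a, (0 : Fin k → ℝ)))
          + ((0 : ℝ), (0 : Fin n → ℝ), w') := by
      simp [Prod.ext_iff]
    have hsum := hchain i'
    rw [hdecomp, map_add, map_add] at hsum
    have hzero := hint i' t x hx a
    rw [h3t, h3x] at hzero
    linarith
  -- deduce w' = 0 via invertibility of the Jacobian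
  have hw0 : w' = 0 := by
    have hrow : ∀ i', ∑ jj, w' jj * fderiv ℝ (fun c => I i' t x c) a (Pi.single jj 1) = 0 := by
      intro i'
      have hφ : ∀ u : Fin k → ℝ, fderiv ℝ (fun c => I i' t x c) a u
          = fderiv ℝ (fun p : ℝ × (Fin n → ℝ) × (Fin k → ℝ) => I i' p.1 p.2.1 p.2.2) (t, x, a)
            ((0 : ℝ), (0 : Fin n → ℝ), u) :=
        fun u => my_partial3_a _ t x a u (hΨd i')
    -- express w' as a combination of basis vectors
      have hu : w' = ∑ jj, w' jj • (Pi.single jj 1 : Fin k → ℝ) := by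
        funext m
        simp [Finset.sum_apply, Pi.single_apply]
      calc ∑ jj, w' jj * fderiv ℝ (fun c => I i' t x c) a (Pi.single jj 1)
          = fderiv ℝ (fun c => I i' t x c) a w' := by
            conv_rhs => rw [hu]
            rw [map_sum]
            simp [smul_eq_mul]
        _ = 0 := by rw [hφ w']; exact hIa0 i'
    have hmv : (Matrix.of fun i' jj : Fin k =>
        fderiv ℝ (fun a => I i' t x a) a (Pi.single jj 1)).mulVec w' = 0 := by
      funext i'
      simpa [Matrix.mulVec, dotProduct, mul_comm] using hrow i'
    have hinj := Matrix.mulVec_injective_iff_isUnit.2 (hinv t x hx b)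
    exact hinj (hmv.trans (Matrix.mulVec_zero _).symm)
  -- now the L part
  have hΦd : DifferentiableAt ℝ
      (fun p : (ℝ × (Fin n → ℝ) × (Fin k → ℝ)) × ℝ => L i j p.1.1 p.1.2.1 p.1.2.2 p.2)
      ((t, x, a), lam) := ((hL i j).differentiable (by simp)) _
  set DG4 : (ℝ × (Fin n → ℝ)) →L[ℝ] (ℝ × (Fin n → ℝ) × (Fin k → ℝ)) × ℝ :=
    DG2.prod 0 with hDG4def
  have hG4 : HasFDerivAt
      (fun p : ℝ × (Fin n → ℝ) => ((p.1, p.2, fun l => It l p.1 p.2 b), lam)) DG4 (t, x) :=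
    HasFDerivAt.prodMk hG2 (hasFDerivAt_const lam (t, x))
  have hLt : HasFDerivAt
      (fun p : ℝ × (Fin n → ℝ) => L i j p.1 p.2 (fun l => It l p.1 p.2 b) lam)
      ((fderiv ℝ (fun p : (ℝ × (Fin n → ℝ) × (Fin k → ℝ)) × ℝ =>
          L i j p.1.1 p.1.2.1 p.1.2.2 p.2) ((t, x, a), lam)).comp DG4) (t, x) :=
    by have := hΦd.hasFDerivAt.comp (t, x) hG4; exact this
  have e1 : deriv (fun s => L i j s x (fun l => It l s x b) lam) t
      = fderiv ℝ (fun p : ℝ × (Fin n → ℝ) => L i j p.1 p.2 (fun l => It l p.1 p.2 b) lam)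
          (t, x) ((1 : ℝ), (0 : Fin n → ℝ)) :=
    my_partial2_t _ t x hLt.differentiableAt
  have e2 : fderiv ℝ (fun y => L i j t y (fun l => It l t y b) lam) x (X t x a)
      = fderiv ℝ (fun p : ℝ × (Fin n → ℝ) => L i j p.1 p.2 (fun l => It l p.1 p.2 b) lam)
          (t, x) ((0 : ℝ), X t x a) :=
    my_partial2_x _ t x (X t x a) hLt.differentiableAt
  rw [e1, e2, ← map_add]
  have hvecsum : (((1 : ℝ), (0 : Fin n → ℝ)) + ((0 : ℝ), X t x a)) = ((1 : ℝ), X t x a) := by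
    simp [Prod.ext_iff]
  rw [hvecsum, hLt.fderiv]
  have hDG4v : DG4 ((1 : ℝ), X t x a) = ((((1 : ℝ), X t x a, w')), (0 : ℝ)) := rfl
  have hcompapply : ((fderiv ℝ (fun p : (ℝ × (Fin n → ℝ) × (Fin k → ℝ)) × ℝ =>
      L i j p.1.1 p.1.2.1 p.1.2.2 p.2) ((t, x, a), lam)).comp DG4) ((1 : ℝ), X t x a)
      = fderiv ℝ (fun p : (ℝ × (Fin n → ℝ) × (Fin k → ℝ)) × ℝ =>
          L i j p.1.1 p.1.2.1 p.1.2.2 p.2) ((t, x, a), lam)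
          ((((1 : ℝ), X t x a, w')), (0 : ℝ)) := by
    rw [ContinuousLinearMap.comp_apply, hDG4v]
  rw [hcompapply, hw0]
  have hdecomp4 : ((((1 : ℝ), X t x a, (0 : Fin k → ℝ))), (0 : ℝ))
      = ((((1 : ℝ), (0 : Fin n → ℝ), (0 : Fin k → ℝ))), (0 : ℝ))
        + ((((0 : ℝ), X t x a, (0 : Fin k → ℝ))), (0 : ℝ)) := by
    simp [Prod.ext_iff]
  rw [hdecomp4, map_add]
  have h4t : deriv (fun s => L i j s x a lam) t
      = fderiv ℝ (fun p : (ℝ × (Fin n → ℝ) × (Fin k → ℝ)) × ℝ =>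
          L i j p.1.1 p.1.2.1 p.1.2.2 p.2) ((t, x, a), lam)
          ((((1 : ℝ), (0 : Fin n → ℝ), (0 : Fin k → ℝ))), (0 : ℝ)) :=
    my_partial4_t _ t x a lam hΦd
  have h4x : fderiv ℝ (fun y => L i j t y a lam) x (X t x a)
      = fderiv ℝ (fun p : (ℝ × (Fin n → ℝ) × (Fin k → ℝ)) × ℝ =>
          L i j p.1.1 p.1.2.1 p.1.2.2 p.2) ((t, x, a), lam)
          ((((0 : ℝ), X t x a, (0 : Fin k → ℝ))), (0 : ℝ)) :=
    my_partial4_x _ t x a lam (X t x a) hΦd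
  rw [← h4t, ← h4x]
  exact hlax i j t x hx a lam
end

section
/- Transformation of solutions: let X(t,x,a) be a smooth vector field on M ⊆ ℝⁿ with smooth integrals I₁,…,I_k (∂I_i/∂t + X(I_i)=0), let Ĩ(t,x,b) solve I(t,x,a)=b implicitly with invertible (∂I_i/∂a_j), and let X̃(t,x,b)=X(t,x,Ĩ(t,x,b)). Suppose γ : ℝ → M is a smooth curve satisfying the transformed system dγ/dt = X̃(t, γ(t), b) for a fixed b ∈ ℝᵏ. Set a(t) := Ĩ(t, γ(t), b). Then a(t) is constant along γ (da/dt = 0), and γ solves the original system dγ/dt = X(t, γ(t), a*) with the constant parameter value a* = a(0). -/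
/-- if `γ` solves the transformed system `dγ/dt = X̃(t,γ,b)` for fixed b,
then `a(t) := Ĩ(t,γ(t),b)` is constant, and `γ` solves the original system
`dγ/dt = X(t,γ,a*)` with the constant parameter value `a* = a(0)`. -/
theorem stackel_solutions_transformed_to_original
    (n k : ℕ) (M : Set (Fin n → ℝ)) (hM : IsOpen M)
    (X : ℝ → (Fin n → ℝ) → (Fin k → ℝ) → (Fin n → ℝ))
    (I : Fin k → ℝ → (Fin n → ℝ) → (Fin k → ℝ) → ℝ)
    (It : Fin k → ℝ → (Fin n → ℝ) → (Fin k → ℝ) → ℝ)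
    (hX : ContDiff ℝ (⊤ : ℕ∞) (fun p : ℝ × (Fin n → ℝ) × (Fin k → ℝ) => X p.1 p.2.1 p.2.2))
    (hI : ∀ i, ContDiff ℝ (⊤ : ℕ∞) (fun p : ℝ × (Fin n → ℝ) × (Fin k → ℝ) => I i p.1 p.2.1 p.2.2))
    (hIt : ∀ i, ContDiff ℝ (⊤ : ℕ∞) (fun p : ℝ × (Fin n → ℝ) × (Fin k → ℝ) => It i p.1 p.2.1 p.2.2))
    -- the Iᵢ are integrals of motion of dx/dt = X
    (hint : ∀ i t, ∀ x ∈ M, ∀ a : Fin k → ℝ,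
      deriv (fun s => I i s x a) t + fderiv ℝ (fun y => I i t y a) x (X t x a) = 0)
    -- implicit equations Iᵢ(t,x,Ĩ(t,x,b)) = bᵢ
    (himp : ∀ i t, ∀ x ∈ M, ∀ b : Fin k → ℝ,
      I i t x (fun l => It l t x b) = b i)
    -- invertibility of (∂Iᵢ/∂aⱼ) along a = Ĩ
    (hinv : ∀ t, ∀ x ∈ M, ∀ b : Fin k → ℝ,
      IsUnit (Matrix.of fun i j : Fin k =>
        fderiv ℝ (fun a => I i t x a) (fun l => It l t x b) (Pi.single j 1)))
    -- γ is a smooth solution of the transformed system with fixed parameter b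
    (b : Fin k → ℝ) (γ : ℝ → (Fin n → ℝ))
    (hγ : ContDiff ℝ (⊤ : ℕ∞) γ) (hγM : ∀ t, γ t ∈ M)
    (hsol : ∀ t, deriv γ t = X t (γ t) (fun l => It l t (γ t) b)) :
    -- (i) a(t) = Ĩ(t,γ(t),b) has vanishing derivative
    (∀ j t, deriv (fun s => It j s (γ s) b) t = 0)
    -- (ii) a(t) is constant
    ∧ (∀ j t, It j t (γ t) b = It j 0 (γ 0) b)
    -- (iii) γ solves the original system with constant parameter a* = a(0)
    ∧ (∀ t, deriv γ t = X t (γ t) (fun l => It l 0 (γ 0) b)) := by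
  classical
  -- differentiability of s ↦ Ĩ_j(s, γ s, b)
  have haj : ∀ j, Differentiable ℝ (fun s => It j s (γ s) b) := by
    intro j
    have hcomp : ContDiff ℝ (⊤ : ℕ∞) (fun s : ℝ => (s, γ s, b)) :=
      contDiff_id.prodMk (hγ.prodMk contDiff_const)
    exact (((hIt j).comp hcomp).differentiable (by simp))
  have key : ∀ t j, deriv (fun s => It j s (γ s) b) t = 0 := by
    intro t j
    set x := γ t with hx
    set at_ : Fin k → ℝ := fun l => It l t (γ t) b with hat
    set d : Fin k → ℝ := fun j => deriv (fun s => It j s (γ s) b) t with hdd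
    have hγ' : HasDerivAt γ (deriv γ t) t := (hγ.differentiable (by simp) t).hasDerivAt
    have ha' : HasDerivAt (fun s => (fun l => It l s (γ s) b)) d t :=
      hasDerivAt_pi.2 fun l => ((haj l) t).hasDerivAt
    have hcurve : HasDerivAt (fun s : ℝ => (s, γ s, fun l => It l s (γ s) b))
        ((1 : ℝ), deriv γ t, d) t :=
      (hasDerivAt_id t).prodMk (hγ'.prodMk ha')
    -- the key linear identity for each i
    have hDf0 : ∀ i, fderiv ℝ (fun a => I i t x a) at_ d = 0 := by
      intro i
      set F : ℝ × (Fin n → ℝ) × (Fin k → ℝ) → ℝ := fun q => I i q.1 q.2.1 q.2.2 with hF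
      set p : ℝ × (Fin n → ℝ) × (Fin k → ℝ) := (t, x, at_) with hp
      have hFd : HasFDerivAt F (fderiv ℝ F p) p :=
        (((hI i).differentiable (by simp)) p).hasFDerivAt
      set Df := fderiv ℝ F p with hDf
      -- partial derivative in t
      have h1 : deriv (fun s => I i s x at_) t = Df (1, 0, 0) := by
        have hc : HasDerivAt (fun s : ℝ => (s, x, at_))
            ((1 : ℝ), (0 : Fin n → ℝ), (0 : Fin k → ℝ)) t :=
          (hasDerivAt_id t).prodMk ((hasDerivAt_const t x).prodMk (hasDerivAt_const t at_))
        exact (hFd.comp_hasDerivAt t hc).deriv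
      -- partial derivative in x
      have h2 : ∀ v, fderiv ℝ (fun y => I i t y at_) x v = Df (0, v, 0) := by
        intro v
        have hc : HasFDerivAt (fun y : Fin n → ℝ => (t, y, at_))
            ((0 : (Fin n → ℝ) →L[ℝ] ℝ).prod
              ((ContinuousLinearMap.id ℝ (Fin n → ℝ)).prod 0)) x :=
          (hasFDerivAt_const t x).prodMk ((hasFDerivAt_id x).prodMk (hasFDerivAt_const at_ x))
        have h := (hFd.comp x hc).fderiv
        calc fderiv ℝ (fun y => I i t y at_) x v
            = fderiv ℝ (F ∘ fun y : Fin n → ℝ => (t, y, at_)) x v := rfl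
          _ = Df (0, v, 0) := by rw [h]; rfl
      -- partial derivative in a
      have h3 : ∀ w, fderiv ℝ (fun a => I i t x a) at_ w = Df (0, 0, w) := by
        intro w
        have hc : HasFDerivAt (fun a : Fin k → ℝ => (t, x, a))
            ((0 : (Fin k → ℝ) →L[ℝ] ℝ).prod
              ((0 : (Fin k → ℝ) →L[ℝ] (Fin n → ℝ)).prod (ContinuousLinearMap.id ℝ (Fin k → ℝ)))) at_ :=
          (hasFDerivAt_const t at_).prodMk ((hasFDerivAt_const x at_).prodMk (hasFDerivAt_id at_))
        have h := (hFd.comp at_ hc).fderiv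
        calc fderiv ℝ (fun a => I i t x a) at_ w
            = fderiv ℝ (F ∘ fun a : Fin k → ℝ => (t, x, a)) at_ w := rfl
          _ = Df (0, 0, w) := by rw [h]; rfl
      -- derivative of the constant b i along the curve
      have hφ : HasDerivAt (fun s => I i s (γ s) (fun l => It l s (γ s) b))
          (Df (1, deriv γ t, d)) t := by have := hFd.comp_hasDerivAt t hcurve; exact this
      have hφc : (fun s => I i s (γ s) (fun l => It l s (γ s) b)) = fun _ => b i := by
        funext s; exact himp i s (γ s) (hγM s) b
      have hzero : Df (1, deriv γ t, d) = 0 := by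
        rw [hφc] at hφ
        exact hφ.unique (hasDerivAt_const t (b i))
      have hsum : ((1 : ℝ), deriv γ t, d)
          = ((1 : ℝ), (0 : Fin n → ℝ), (0 : Fin k → ℝ)) + (0, deriv γ t, 0) + (0, 0, d) := by
        simp [Prod.ext_iff]
      have hlin : Df (1, 0, 0) + Df (0, deriv γ t, 0) + Df (0, 0, d) = 0 := by
        rw [← map_add, ← map_add, ← hsum, hzero]
      have hintt := hint i t x (hγM t) at_
      rw [h1, h2] at hintt
      have hγderiv : deriv γ t = X t x at_ := hsol t
      rw [hγderiv] at hlin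
      rw [hintt] at hlin
      rw [h3]
      simpa using hlin
    -- now use invertibility of the matrix
    set Mt : Matrix (Fin k) (Fin k) ℝ := Matrix.of fun i j : Fin k =>
      fderiv ℝ (fun a => I i t x a) (fun l => It l t x b) (Pi.single j 1) with hMt
    have hdexp : d = ∑ j, d j • (Pi.single j 1 : Fin k → ℝ) := by
      funext l
      simp [Pi.single_apply, Finset.sum_ite_eq']
    have hmul : Mt.mulVec d = 0 := by
      funext i
      have := hDf0 i
      rw [hdexp, map_sum] at this
      simp only [map_smul] at this
      have hrw : ∀ j, fderiv ℝ (fun a => I i t x a) at_ (Pi.single j 1) = Mt i j := fun j => rfl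
      simp only [smul_eq_mul] at this
      calc Mt.mulVec d i = ∑ j, Mt i j * d j := rfl
        _ = ∑ j, d j * fderiv ℝ (fun a => I i t x a) at_ (Pi.single j 1) := by
              refine Finset.sum_congr rfl fun j _ => ?_
              rw [hrw j, mul_comm]
        _ = 0 := this
    have hunit : IsUnit Mt := hinv t x (hγM t) b
    have hinj := Matrix.mulVec_injective_iff_isUnit.2 hunit
    have : d = 0 := by
      apply hinj
      rw [hmul, Matrix.mulVec_zero]
    exact congrFun this j
  refine ⟨fun j t => key t j, ?_, ?_⟩
  · intro j t
    exact is_const_of_deriv_eq_zero (haj j) (fun s => key s j) t 0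
  · intro t
    have hc : (fun l => It l t (γ t) b) = fun l => It l 0 (γ 0) b :=
      funext fun l => is_const_of_deriv_eq_zero (haj l) (fun s => key s l) t 0
    rw [hsol t, hc]
end

section
/- Functional independence is preserved: with the setup of the generalized Stäckel transform, let I₁,…,I_k, J₁,…,J_m : ℝ × M × ℝᵏ → ℝ and let (t₀,x₀,b₀) be a point; if the x-differentials dₓI₁,…,dₓI_k, dₓJ₁,…,dₓJ_m (with a frozen at Ĩ(t₀,x₀,b₀)) are linearly independent at x₀, then the x-differentials dₓĨ₁,…,dₓĨ_k, dₓJ̃₁,…,dₓJ̃_m of the transformed functions are linearly independent at x₀. -/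
lemma clm_pi_decomp {k : ℕ} (P : (Fin k → ℝ) →L[ℝ] ℝ) (c : Fin k → ℝ) :
    P c = ∑ j, c j * P (Pi.single j 1) := by
  conv_lhs => rw [← Finset.univ_sum_single c]
  rw [map_sum]
  refine Finset.sum_congr rfl fun j _ => ?_
  have h : Pi.single j (c j) = c j • (Pi.single j 1 : Fin k → ℝ) := by
    rw [← Pi.single_smul, smul_eq_mul, mul_one]
  rw [h, map_smul, smul_eq_mul]

lemma fderiv_comp_frozen {n k : ℕ}
    (g : ℝ × (Fin n → ℝ) × (Fin k → ℝ) → ℝ) (hg : ContDiff ℝ (⊤ : ℕ∞) g)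
    (t₀ : ℝ) (x₀ : Fin n → ℝ) (F : (Fin n → ℝ) → (Fin k → ℝ))
    (W : (Fin n → ℝ) →L[ℝ] (Fin k → ℝ)) (hF : HasFDerivAt F W x₀) :
    fderiv ℝ (fun y => g (t₀, y, F y)) x₀
      = fderiv ℝ (fun y => g (t₀, y, F x₀)) x₀
        + (fderiv ℝ (fun a => g (t₀, x₀, a)) (F x₀)).comp W := by
  have hDg : HasFDerivAt g (fderiv ℝ g (t₀, x₀, F x₀)) (t₀, x₀, F x₀) :=
    ((hg.differentiable (by simp)) _).hasFDerivAt
  set Dg := fderiv ℝ g (t₀, x₀, F x₀) with hDgdef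
  have hinner : HasFDerivAt (fun y : Fin n → ℝ => (t₀, y, F y))
      ((0 : (Fin n → ℝ) →L[ℝ] ℝ).prod ((ContinuousLinearMap.id ℝ _).prod W)) x₀ :=
    (hasFDerivAt_const t₀ x₀).prodMk ((hasFDerivAt_id x₀).prodMk hF)
  have hcomp : HasFDerivAt (fun y => g (t₀, y, F y))
      (Dg.comp ((0 : (Fin n → ℝ) →L[ℝ] ℝ).prod ((ContinuousLinearMap.id ℝ _).prod W))) x₀ :=
    hDg.comp x₀ hinner
  have h1 : HasFDerivAt (fun y => g (t₀, y, F x₀))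
      (Dg.comp ((0 : (Fin n → ℝ) →L[ℝ] ℝ).prod
        ((ContinuousLinearMap.id ℝ _).prod (0 : (Fin n → ℝ) →L[ℝ] (Fin k → ℝ))))) x₀ :=
    hDg.comp x₀ ((hasFDerivAt_const t₀ x₀).prodMk
      ((hasFDerivAt_id x₀).prodMk (hasFDerivAt_const _ x₀)))
  have h2 : HasFDerivAt (fun a => g (t₀, x₀, a))
      (Dg.comp ((0 : (Fin k → ℝ) →L[ℝ] ℝ).prod
        ((0 : (Fin k → ℝ) →L[ℝ] (Fin n → ℝ)).prod (ContinuousLinearMap.id ℝ _)))) (F x₀) :=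
    hDg.comp (F x₀) ((hasFDerivAt_const t₀ (F x₀)).prodMk
      ((hasFDerivAt_const x₀ (F x₀)).prodMk (hasFDerivAt_id (F x₀))))
  rw [hcomp.fderiv, h1.fderiv, h2.fderiv]
  ext v
  simp only [ContinuousLinearMap.comp_apply, ContinuousLinearMap.add_apply,
    ContinuousLinearMap.prod_apply, ContinuousLinearMap.zero_apply,
    ContinuousLinearMap.id_apply]
  rw [← map_add]
  congr 1
  simp [Prod.ext_iff]

lemma indep_transform {V : Type*} [AddCommGroup V] [Module ℝ V] {k m : ℕ}
    (u w : Fin k → V) (v z : Fin m → V)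
    (A B : Matrix (Fin k) (Fin k) ℝ) (Q : Matrix (Fin m) (Fin k) ℝ)
    (hBA : B * A = 1)
    (hu : ∀ i, u i = -∑ j, A i j • w j)
    (hz : ∀ r, z r = v r + ∑ j, Q r j • w j)
    (hindep : LinearIndependent ℝ (Sum.elim u v)) :
    LinearIndependent ℝ (Sum.elim w z) := by
  classical
  have hw : ∀ j, w j = -∑ i, B j i • u i := by
    intro j
    have h : ∑ i, B j i • u i = -w j := by
      calc ∑ i, B j i • u i = ∑ i, B j i • (-∑ l, A i l • w l) := by
            exact Finset.sum_congr rfl fun i _ => by rw [hu i]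
        _ = -∑ i, ∑ l, (B j i * A i l) • w l := by
            rw [← Finset.sum_neg_distrib]
            exact Finset.sum_congr rfl fun i _ => by
              rw [smul_neg, Finset.smul_sum]
              congr 1
              exact Finset.sum_congr rfl fun l _ => by rw [smul_smul]
        _ = -∑ l, (∑ i, B j i * A i l) • w l := by
            rw [Finset.sum_comm]
            congr 1
            exact Finset.sum_congr rfl fun l _ => by rw [Finset.sum_smul]
        _ = -∑ l, ((B * A) j l) • w l := by
            simp [Matrix.mul_apply]
        _ = -w j := by
            rw [hBA]
            simp [Matrix.one_apply]
    rw [h, neg_neg]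
  rw [Fintype.linearIndependent_iff] at hindep ⊢
  intro g hg
  rw [Fintype.sum_sum_type] at hg
  simp only [Sum.elim_inl, Sum.elim_inr] at hg
  set e : Fin k → ℝ := fun j => g (Sum.inl j) + ∑ r, g (Sum.inr r) * Q r j with he
  have key : ∑ i, (-(∑ j, e j * B j i)) • u i + ∑ r, g (Sum.inr r) • v r = 0 := by
    have step1 : ∑ r, g (Sum.inr r) • z r
        = ∑ r, g (Sum.inr r) • v r + ∑ j, (∑ r, g (Sum.inr r) * Q r j) • w j := by
      calc ∑ r, g (Sum.inr r) • z r
          = ∑ r, (g (Sum.inr r) • v r + ∑ j, (g (Sum.inr r) * Q r j) • w j) := by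
            exact Finset.sum_congr rfl fun r _ => by
              rw [hz r, smul_add, Finset.smul_sum]
              congr 1
              exact Finset.sum_congr rfl fun j _ => by rw [smul_smul]
        _ = ∑ r, g (Sum.inr r) • v r + ∑ r, ∑ j, (g (Sum.inr r) * Q r j) • w j := by
            rw [Finset.sum_add_distrib]
        _ = ∑ r, g (Sum.inr r) • v r + ∑ j, (∑ r, g (Sum.inr r) * Q r j) • w j := by
            rw [Finset.sum_comm]
            congr 1
            exact Finset.sum_congr rfl fun j _ => by rw [Finset.sum_smul]
    have step2 : ∑ i, g (Sum.inl i) • w i + ∑ r, g (Sum.inr r) • z r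
        = ∑ j, e j • w j + ∑ r, g (Sum.inr r) • v r := by
      rw [step1, he]
      have : ∑ j, (g (Sum.inl j) + ∑ r, g (Sum.inr r) * Q r j) • w j
          = ∑ j, g (Sum.inl j) • w j + ∑ j, (∑ r, g (Sum.inr r) * Q r j) • w j := by
        rw [← Finset.sum_add_distrib]
        exact Finset.sum_congr rfl fun j _ => by rw [add_smul]
      rw [this]
      abel
    have step3 : ∑ j, e j • w j = ∑ i, (-(∑ j, e j * B j i)) • u i := by
      calc ∑ j, e j • w j = ∑ j, e j • (-∑ i, B j i • u i) := by
            exact Finset.sum_congr rfl fun j _ => by rw [hw j]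
        _ = -∑ j, ∑ i, (e j * B j i) • u i := by
            rw [← Finset.sum_neg_distrib]
            exact Finset.sum_congr rfl fun j _ => by
              rw [smul_neg, Finset.smul_sum]
              congr 1
              exact Finset.sum_congr rfl fun i _ => by rw [smul_smul]
        _ = -∑ i, (∑ j, e j * B j i) • u i := by
            rw [Finset.sum_comm]
            congr 1
            exact Finset.sum_congr rfl fun i _ => by rw [Finset.sum_smul]
        _ = ∑ i, (-(∑ j, e j * B j i)) • u i := by
            rw [← Finset.sum_neg_distrib]
            exact Finset.sum_congr rfl fun i _ => by rw [neg_smul]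
    rw [← step3, ← step2]
    exact hg
  have h0 := hindep (Sum.elim (fun i => -(∑ j, e j * B j i)) (fun r => g (Sum.inr r))) (by
    rw [Fintype.sum_sum_type]
    simp only [Sum.elim_inl, Sum.elim_inr]
    exact key)
  have hd : ∀ r, g (Sum.inr r) = 0 := fun r => h0 (Sum.inr r)
  have hE : ∀ i, ∑ j, e j * B j i = 0 := fun i => by
    have := h0 (Sum.inl i); simpa [neg_eq_zero] using this
  have hec : ∀ j, e j = g (Sum.inl j) := fun j => by
    simp [he, hd]
  have hcB : ∀ i, ∑ j, g (Sum.inl j) * B j i = 0 := fun i => by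
    have := hE i
    rwa [Finset.sum_congr rfl fun j _ => by rw [hec j]] at this
  have hc : ∀ i, g (Sum.inl i) = 0 := by
    have hvB : Matrix.vecMul (fun j => g (Sum.inl j)) B = 0 := by
      funext i
      simpa [Matrix.vecMul, dotProduct] using hcB i
    have h1 : Matrix.vecMul (fun j => g (Sum.inl j)) (B * A) = fun j => g (Sum.inl j) := by
      rw [hBA, Matrix.vecMul_one]
    rw [← Matrix.vecMul_vecMul, hvB, Matrix.zero_vecMul] at h1
    intro i
    exact (congrFun h1.symm i)
  intro s
  cases s with
  | inl i => exact hc i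
  | inr r => exact hd r



/-- functional independence is preserved: if the x-differentials of
`I₁,…,I_k, J₁,…,J_m` (with a frozen at `Ĩ(t₀,x₀,b₀)`) are linearly independent at `x₀`,
then so are the x-differentials of the transformed functions `Ĩ₁,…,Ĩ_k, J̃₁,…,J̃_m`. -/
theorem stackel_functional_independence
    (n k m : ℕ) (M : Set (Fin n → ℝ)) (hM : IsOpen M)
    (I : Fin k → ℝ → (Fin n → ℝ) → (Fin k → ℝ) → ℝ)
    (It : Fin k → ℝ → (Fin n → ℝ) → (Fin k → ℝ) → ℝ)
    (J : Fin m → ℝ → (Fin n → ℝ) → (Fin k → ℝ) → ℝ)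
    (hI : ∀ i, ContDiff ℝ (⊤ : ℕ∞) (fun p : ℝ × (Fin n → ℝ) × (Fin k → ℝ) => I i p.1 p.2.1 p.2.2))
    (hIt : ∀ i, ContDiff ℝ (⊤ : ℕ∞) (fun p : ℝ × (Fin n → ℝ) × (Fin k → ℝ) => It i p.1 p.2.1 p.2.2))
    (hJ : ∀ r, ContDiff ℝ (⊤ : ℕ∞) (fun p : ℝ × (Fin n → ℝ) × (Fin k → ℝ) => J r p.1 p.2.1 p.2.2))
    -- implicit equations Iᵢ(t,x,Ĩ(t,x,b)) = bᵢ
    (himp : ∀ i t, ∀ x ∈ M, ∀ b : Fin k → ℝ,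
      I i t x (fun l => It l t x b) = b i)
    -- invertibility of (∂Iᵢ/∂aⱼ) along a = Ĩ
    (hinv : ∀ t, ∀ x ∈ M, ∀ b : Fin k → ℝ,
      IsUnit (Matrix.of fun i j : Fin k =>
        fderiv ℝ (fun a => I i t x a) (fun l => It l t x b) (Pi.single j 1)))
    -- the point at which independence is considered
    (t₀ : ℝ) (x₀ : Fin n → ℝ) (hx₀ : x₀ ∈ M) (b₀ : Fin k → ℝ)
    -- dₓI₁,…,dₓI_k, dₓJ₁,…,dₓJ_m (with a frozen at Ĩ(t₀,x₀,b₀)) are linearly independent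
    (hindep : LinearIndependent ℝ (Sum.elim
      (fun i : Fin k =>
        fderiv ℝ (fun y => I i t₀ y (fun l => It l t₀ x₀ b₀)) x₀)
      (fun r : Fin m =>
        fderiv ℝ (fun y => J r t₀ y (fun l => It l t₀ x₀ b₀)) x₀))) :
    -- conclusion: dₓĨ₁,…,dₓĨ_k, dₓJ̃₁,…,dₓJ̃_m are linearly independent at x₀
    LinearIndependent ℝ (Sum.elim
      (fun i : Fin k => fderiv ℝ (fun y => It i t₀ y b₀) x₀)
      (fun r : Fin m =>
        fderiv ℝ (fun y => J r t₀ y (fun l => It l t₀ y b₀)) x₀)) := by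
  classical
  have hItdiff : ∀ j, DifferentiableAt ℝ (fun y => It j t₀ y b₀) x₀ := by
    intro j
    have hinner : DifferentiableAt ℝ
        (fun y : Fin n → ℝ => ((t₀, y, b₀) : ℝ × (Fin n → ℝ) × (Fin k → ℝ))) x₀ :=
      (differentiableAt_const _).prodMk (differentiableAt_id.prodMk (differentiableAt_const _))
    exact (((hIt j).differentiable (by simp)) (t₀, x₀, b₀)).comp x₀ hinner
  have hW : HasFDerivAt (fun y : Fin n → ℝ => (fun l => It l t₀ y b₀ : Fin k → ℝ))
      (ContinuousLinearMap.pi fun j => fderiv ℝ (fun y => It j t₀ y b₀) x₀) x₀ :=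
    hasFDerivAt_pi.mpr fun j => (hItdiff j).hasFDerivAt
  have hA : IsUnit (Matrix.of fun i j : Fin k =>
      fderiv ℝ (fun a => I i t₀ x₀ a) (fun l => It l t₀ x₀ b₀) (Pi.single j 1)) :=
    hinv t₀ x₀ hx₀ b₀
  refine indep_transform
    (fun i => fderiv ℝ (fun y => I i t₀ y (fun l => It l t₀ x₀ b₀)) x₀)
    (fun i => fderiv ℝ (fun y => It i t₀ y b₀) x₀)
    (fun r => fderiv ℝ (fun y => J r t₀ y (fun l => It l t₀ x₀ b₀)) x₀)
    (fun r => fderiv ℝ (fun y => J r t₀ y (fun l => It l t₀ y b₀)) x₀)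
    (Matrix.of fun i j : Fin k =>
      fderiv ℝ (fun a => I i t₀ x₀ a) (fun l => It l t₀ x₀ b₀) (Pi.single j 1))
    ((Matrix.of fun i j : Fin k =>
      fderiv ℝ (fun a => I i t₀ x₀ a) (fun l => It l t₀ x₀ b₀) (Pi.single j 1))⁻¹)
    (Matrix.of fun (r : Fin m) (j : Fin k) =>
      fderiv ℝ (fun a => J r t₀ x₀ a) (fun l => It l t₀ x₀ b₀) (Pi.single j 1))
    (Matrix.nonsing_inv_mul _ ((Matrix.isUnit_iff_isUnit_det _).mp hA))
    ?_ ?_ hindep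
  · -- hu
    intro i
    have hch : fderiv ℝ (fun y => I i t₀ y (fun l => It l t₀ y b₀)) x₀
        = fderiv ℝ (fun y => I i t₀ y (fun l => It l t₀ x₀ b₀)) x₀
          + (fderiv ℝ (fun a => I i t₀ x₀ a) (fun l => It l t₀ x₀ b₀)).comp
              (ContinuousLinearMap.pi fun j => fderiv ℝ (fun y => It j t₀ y b₀) x₀) :=
      fderiv_comp_frozen (fun p => I i p.1 p.2.1 p.2.2) (hI i) t₀ x₀
        (fun y l => It l t₀ y b₀) _ hW
    have h0 : fderiv ℝ (fun y => I i t₀ y (fun l => It l t₀ y b₀)) x₀ = 0 := by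
      have hev : (fun y => I i t₀ y (fun l => It l t₀ y b₀)) =ᶠ[nhds x₀] fun _ => b₀ i :=
        Filter.eventually_of_mem (hM.mem_nhds hx₀) (fun y hy => himp i t₀ y hy b₀)
      rw [hev.fderiv_eq]
      exact fderiv_const_apply (b₀ i)
    rw [h0] at hch
    have hcomp : (fderiv ℝ (fun a => I i t₀ x₀ a) (fun l => It l t₀ x₀ b₀)).comp
        (ContinuousLinearMap.pi fun j => fderiv ℝ (fun y => It j t₀ y b₀) x₀)
        = ∑ j, (Matrix.of fun i j : Fin k =>
            fderiv ℝ (fun a => I i t₀ x₀ a) (fun l => It l t₀ x₀ b₀) (Pi.single j 1)) i j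
              • fderiv ℝ (fun y => It j t₀ y b₀) x₀ := by
      ext v
      rw [ContinuousLinearMap.comp_apply, clm_pi_decomp]
      simp only [ContinuousLinearMap.sum_apply, ContinuousLinearMap.smul_apply,
        ContinuousLinearMap.pi_apply, Matrix.of_apply, smul_eq_mul]
      exact Finset.sum_congr rfl fun j _ => mul_comm _ _
    rw [hcomp] at hch
    exact eq_neg_of_add_eq_zero_left hch.symm
  · -- hz
    intro r
    have hch : fderiv ℝ (fun y => J r t₀ y (fun l => It l t₀ y b₀)) x₀
        = fderiv ℝ (fun y => J r t₀ y (fun l => It l t₀ x₀ b₀)) x₀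
          + (fderiv ℝ (fun a => J r t₀ x₀ a) (fun l => It l t₀ x₀ b₀)).comp
              (ContinuousLinearMap.pi fun j => fderiv ℝ (fun y => It j t₀ y b₀) x₀) :=
      fderiv_comp_frozen (fun p => J r p.1 p.2.1 p.2.2) (hJ r) t₀ x₀
        (fun y l => It l t₀ y b₀) _ hW
    have hcomp : (fderiv ℝ (fun a => J r t₀ x₀ a) (fun l => It l t₀ x₀ b₀)).comp
        (ContinuousLinearMap.pi fun j => fderiv ℝ (fun y => It j t₀ y b₀) x₀)
        = ∑ j, (Matrix.of fun (r : Fin m) (j : Fin k) =>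
            fderiv ℝ (fun a => J r t₀ x₀ a) (fun l => It l t₀ x₀ b₀) (Pi.single j 1)) r j
              • fderiv ℝ (fun y => It j t₀ y b₀) x₀ := by
      ext v
      rw [ContinuousLinearMap.comp_apply, clm_pi_decomp]
      simp only [ContinuousLinearMap.sum_apply, ContinuousLinearMap.smul_apply,
        ContinuousLinearMap.pi_apply, Matrix.of_apply, smul_eq_mul]
      exact Finset.sum_congr rfl fun j _ => mul_comm _ _
    rw [hcomp] at hch
    exact hch
end

section
/- Involutivity of transformed PDE systems: let X_A(t¹,…,t^d, x, a), A = 1,…,d, be smooth parameter-dependent vector fields on open M ⊆ ℝⁿ satisfying the involutivity (zero-curvature) conditions ∂X_A/∂t^B − ∂X_B/∂t^A − [X_A, X_B] = 0 for all A,B, and let I₁,…,I_k be joint integrals: ∂I_j/∂t^A + X_A(I_j) = 0 for all A, j. Let a = Ĩ(t,x,b) be the smooth implicit solution of I(t,x,a) = b with (∂I_i/∂a_j) invertible along a = Ĩ, and set X̃_A(t,x,b) = X_A(t,x,Ĩ(t,x,b)). Then the transformed system is again in involution: ∂X̃_A/∂t^B − ∂X̃_B/∂t^A − [X̃_A, X̃_B]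 = 0 for all A,B, and each Ĩ_j is a joint integral of the X̃_A: ∂Ĩ_j/∂t^A + X̃_A(Ĩ_j) = 0. -/
section helpers

variable {A B C E : Type*} [NormedAddCommGroup A] [NormedSpace ℝ A]
  [NormedAddCommGroup B] [NormedSpace ℝ B] [NormedAddCommGroup C] [NormedSpace ℝ C]
  [NormedAddCommGroup E] [NormedSpace ℝ E]

lemma fd_chain1 (f : A × B × C → E) (u : A → C) {t : A} (x : B) (U : A →L[ℝ] C)
    (hu : HasFDerivAt u U t) (hf : DifferentiableAt ℝ f (t, x, u t)) (v : A) :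
    fderiv ℝ (fun s => f (s, x, u s)) t v = fderiv ℝ f (t, x, u t) (v, 0, U v) := by
  have h : HasFDerivAt (fun s : A => (s, x, u s))
      ((ContinuousLinearMap.id ℝ A).prod ((0 : A →L[ℝ] B).prod U)) t :=
    (hasFDerivAt_id t).prodMk ((hasFDerivAt_const x t).prodMk hu)
  have h2 : fderiv ℝ (fun s => f (s, x, u s)) t = (fderiv ℝ f (t, x, u t)).comp
      ((ContinuousLinearMap.id ℝ A).prod ((0 : A →L[ℝ] B).prod U)) :=
    (hf.hasFDerivAt.comp t h).fderiv
  rw [h2]; rfl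

lemma fd_chain2 (f : A × B × C → E) (u : B → C) (t : A) {x : B} (U : B →L[ℝ] C)
    (hu : HasFDerivAt u U x) (hf : DifferentiableAt ℝ f (t, x, u x)) (w : B) :
    fderiv ℝ (fun y => f (t, y, u y)) x w = fderiv ℝ f (t, x, u x) (0, w, U w) := by
  have h : HasFDerivAt (fun y : B => (t, y, u y))
      ((0 : B →L[ℝ] A).prod ((ContinuousLinearMap.id ℝ B).prod U)) x :=
    (hasFDerivAt_const t x).prodMk ((hasFDerivAt_id x).prodMk hu)
  have h2 : fderiv ℝ (fun y => f (t, y, u y)) x = (fderiv ℝ f (t, x, u x)).comp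
      ((0 : B →L[ℝ] A).prod ((ContinuousLinearMap.id ℝ B).prod U)) :=
    (hf.hasFDerivAt.comp x h).fderiv
  rw [h2]; rfl

lemma fd_slot1 (f : A × B × C → E) {t : A} (x : B) (c : C)
    (hf : DifferentiableAt ℝ f (t, x, c)) (v : A) :
    fderiv ℝ (fun s => f (s, x, c)) t v = fderiv ℝ f (t, x, c) (v, 0, 0) := by
  simpa using fd_chain1 f (fun _ => c) x 0 (hasFDerivAt_const c t) hf v

lemma fd_slot2 (f : A × B × C → E) (t : A) {x : B} (c : C)
    (hf : DifferentiableAt ℝ f (t, x, c)) (w : B) :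
    fderiv ℝ (fun y => f (t, y, c)) x w = fderiv ℝ f (t, x, c) (0, w, 0) := by
  simpa using fd_chain2 f (fun _ => c) t 0 (hasFDerivAt_const c x) hf w

lemma fd_slot3 (f : A × B × C → E) (t : A) (x : B) {c : C}
    (hf : DifferentiableAt ℝ f (t, x, c)) (v : C) :
    fderiv ℝ (fun z => f (t, x, z)) c v = fderiv ℝ f (t, x, c) (0, 0, v) := by
  have h : HasFDerivAt (fun z : C => (t, x, z))
      ((0 : C →L[ℝ] A).prod ((0 : C →L[ℝ] B).prod (ContinuousLinearMap.id ℝ C))) c :=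
    (hasFDerivAt_const t c).prodMk ((hasFDerivAt_const x c).prodMk (hasFDerivAt_id c))
  have h2 : fderiv ℝ (fun z => f (t, x, z)) c = (fderiv ℝ f (t, x, c)).comp
      ((0 : C →L[ℝ] A).prod ((0 : C →L[ℝ] B).prod (ContinuousLinearMap.id ℝ C))) :=
    (hf.hasFDerivAt.comp c h).fderiv
  rw [h2]; rfl

end helpers

/-- Auxiliary: part (ii), the Ĩⱼ are joint integrals of the transformed fields. -/
lemma stackel_aux
    (n k d : ℕ) (M : Set (Fin n → ℝ)) (hM : IsOpen M)
    (X : Fin d → (Fin d → ℝ) → (Fin n → ℝ) → (Fin k → ℝ) → (Fin n → ℝ))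
    (I : Fin k → (Fin d → ℝ) → (Fin n → ℝ) → (Fin k → ℝ) → ℝ)
    (It : Fin k → (Fin d → ℝ) → (Fin n → ℝ) → (Fin k → ℝ) → ℝ)
    (hI : ∀ i, ContDiff ℝ (⊤ : ℕ∞)
      (fun p : (Fin d → ℝ) × (Fin n → ℝ) × (Fin k → ℝ) => I i p.1 p.2.1 p.2.2))
    (hIt : ∀ i, ContDiff ℝ (⊤ : ℕ∞)
      (fun p : (Fin d → ℝ) × (Fin n → ℝ) × (Fin k → ℝ) => It i p.1 p.2.1 p.2.2))
    (hint : ∀ (j : Fin k) (A : Fin d), ∀ t : Fin d → ℝ, ∀ x ∈ M, ∀ a : Fin k → ℝ,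
      fderiv ℝ (fun s => I j s x a) t (Pi.single A 1)
        + fderiv ℝ (fun y => I j t y a) x (X A t x a) = 0)
    (himp : ∀ i, ∀ t : Fin d → ℝ, ∀ x ∈ M, ∀ b : Fin k → ℝ,
      I i t x (fun l => It l t x b) = b i)
    (hinv : ∀ t : Fin d → ℝ, ∀ x ∈ M, ∀ b : Fin k → ℝ,
      IsUnit (Matrix.of fun i j : Fin k =>
        fderiv ℝ (fun a => I i t x a) (fun l => It l t x b) (Pi.single j 1))) :
    ∀ (j : Fin k) (A : Fin d), ∀ t : Fin d → ℝ, ∀ x ∈ M, ∀ b : Fin k → ℝ,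
        fderiv ℝ (fun s => It j s x b) t (Pi.single A 1)
          + fderiv ℝ (fun y => It j t y b) x
              (X A t x (fun l => It l t x b)) = 0 := by
  intro j A t x hx b
  classical
  set a : Fin k → ℝ := fun l => It l t x b with ha
  set q : (Fin d → ℝ) × (Fin n → ℝ) × (Fin k → ℝ) := (t, x, a) with hq
  set XA : Fin n → ℝ := X A t x a with hXA
  set eA : Fin d → ℝ := Pi.single A 1 with heA
  -- derivative of Ĩ in t and x directions
  have hItd1 : ∀ l, Differentiable ℝ (fun s => It l s x b) := fun l =>
    ((hIt l).comp (contDiff_id.prodMk (contDiff_const (c := (x, b))))).differentiable (by simp)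
  have hItd2 : ∀ l, Differentiable ℝ (fun y => It l t y b) := fun l =>
    ((hIt l).comp ((contDiff_const (c := t)).prodMk (contDiff_id.prodMk (contDiff_const (c := b))))).differentiable (by simp)
  set Ut : (Fin d → ℝ) →L[ℝ] (Fin k → ℝ) :=
    ContinuousLinearMap.pi (fun l => fderiv ℝ (fun s => It l s x b) t) with hUtdef
  set Ux : (Fin n → ℝ) →L[ℝ] (Fin k → ℝ) :=
    ContinuousLinearMap.pi (fun l => fderiv ℝ (fun y => It l t y b) x) with hUxdef
  have hUt : HasFDerivAt (fun s => (fun l => It l s x b)) Ut t :=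
    hasFDerivAt_pi.2 fun l => ((hItd1 l) t).hasFDerivAt
  have hUx : HasFDerivAt (fun y => (fun l => It l t y b)) Ux x :=
    hasFDerivAt_pi.2 fun l => ((hItd2 l) x).hasFDerivAt
  have hId : ∀ jj, Differentiable ℝ
      (fun p : (Fin d → ℝ) × (Fin n → ℝ) × (Fin k → ℝ) => I jj p.1 p.2.1 p.2.2) :=
    fun jj => (hI jj).differentiable (by simp)
  -- T: derivative of the (constant) map s ↦ I j s x Ĩ(s,x,b)
  have T : ∀ jj v, fderiv ℝ
      (fun p : (Fin d → ℝ) × (Fin n → ℝ) × (Fin k → ℝ) => I jj p.1 p.2.1 p.2.2) q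
      (v, 0, Ut v) = 0 := by
    intro jj v
    have h1 : fderiv ℝ (fun s => I jj s x (fun l => It l s x b)) t v
        = fderiv ℝ (fun p : (Fin d → ℝ) × (Fin n → ℝ) × (Fin k → ℝ) =>
            I jj p.1 p.2.1 p.2.2) q (v, 0, Ut v) :=
      fd_chain1 _ (fun s => (fun l => It l s x b)) x Ut hUt ((hId jj) q) v
    have h0 : (fun s => I jj s x (fun l => It l s x b)) = fun _ => b jj :=
      funext fun s => himp jj s x hx b
    rw [← h1, h0, fderiv_const_apply]
    rfl
  -- Xrel: derivative of the (locally constant) map y ↦ I j t y Ĩ(t,y,b)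
  have Xr : ∀ jj w, fderiv ℝ
      (fun p : (Fin d → ℝ) × (Fin n → ℝ) × (Fin k → ℝ) => I jj p.1 p.2.1 p.2.2) q
      (0, w, Ux w) = 0 := by
    intro jj w
    have h1 : fderiv ℝ (fun y => I jj t y (fun l => It l t y b)) x w
        = fderiv ℝ (fun p : (Fin d → ℝ) × (Fin n → ℝ) × (Fin k → ℝ) =>
            I jj p.1 p.2.1 p.2.2) q (0, w, Ux w) :=
      fd_chain2 _ (fun y => (fun l => It l t y b)) t Ux hUx ((hId jj) q) w
    have hev : (fun y => I jj t y (fun l => It l t y b)) =ᶠ[nhds x] (fun _ => b jj) :=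
      Filter.eventually_of_mem (hM.mem_nhds hx) (fun y hy => himp jj t y hy b)
    have h0 : fderiv ℝ (fun y => I jj t y (fun l => It l t y b)) x
        = fderiv ℝ (fun _ : Fin n → ℝ => b jj) x := hev.fderiv_eq
    rw [← h1, h0, fderiv_const_apply]
    rfl
  -- the integral condition at a = Ĩ(t,x,b), in full-derivative form
  have hint3 : ∀ jj, fderiv ℝ
      (fun p : (Fin d → ℝ) × (Fin n → ℝ) × (Fin k → ℝ) => I jj p.1 p.2.1 p.2.2) q
      (eA, XA, 0) = 0 := by
    intro jj
    have h1 : fderiv ℝ (fun s => I jj s x a) t eA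
        = fderiv ℝ (fun p : (Fin d → ℝ) × (Fin n → ℝ) × (Fin k → ℝ) =>
            I jj p.1 p.2.1 p.2.2) q (eA, 0, 0) := fd_slot1 _ x a ((hId jj) q) eA
    have h2 : fderiv ℝ (fun y => I jj t y a) x XA
        = fderiv ℝ (fun p : (Fin d → ℝ) × (Fin n → ℝ) × (Fin k → ℝ) =>
            I jj p.1 p.2.1 p.2.2) q (0, XA, 0) := fd_slot2 _ t a ((hId jj) q) XA
    have h3 := hint jj A t x hx a
    rw [h1, h2, ← map_add] at h3
    convert h3 using 2
    simp [Prod.ext_iff]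
  -- the combined vector c and the fact that D_a I kills it
  set c : Fin k → ℝ := Ut eA + Ux XA with hc
  have hc0 : ∀ jj, fderiv ℝ
      (fun p : (Fin d → ℝ) × (Fin n → ℝ) × (Fin k → ℝ) => I jj p.1 p.2.1 p.2.2) q
      (0, 0, c) = 0 := by
    intro jj
    have h1 : ((eA, XA, c) : (Fin d → ℝ) × (Fin n → ℝ) × (Fin k → ℝ))
        = (eA, 0, Ut eA) + (0, XA, Ux XA) := by simp [hc, Prod.ext_iff]
    have h2 : ((0, 0, c) : (Fin d → ℝ) × (Fin n → ℝ) × (Fin k → ℝ))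
        = (eA, XA, c) - (eA, XA, 0) := by simp [Prod.ext_iff]
    rw [h2, map_sub, h1, map_add, T jj eA, Xr jj XA, hint3 jj]
    simp
  -- express via the matrix M and conclude c = 0
  have hMc : (Matrix.of fun i j : Fin k =>
      fderiv ℝ (fun a' => I i t x a') a (Pi.single j 1)).mulVec c = 0 := by
    funext jj
    have h3 : fderiv ℝ (fun z => I jj t x z) a c
        = fderiv ℝ (fun p : (Fin d → ℝ) × (Fin n → ℝ) × (Fin k → ℝ) =>
            I jj p.1 p.2.1 p.2.2) q (0, 0, c) := fd_slot3 _ t x ((hId jj) q) c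
    have hrep : c = ∑ l, c l • (Pi.single l 1 : Fin k → ℝ) := by
      funext m
      rw [Finset.sum_apply]
      simp [Pi.single_apply]
    have h4 : fderiv ℝ (fun z => I jj t x z) a c
        = ∑ l, c l * fderiv ℝ (fun z => I jj t x z) a (Pi.single l 1) := by
      conv_lhs => rw [hrep]
      rw [map_sum]
      simp [smul_eq_mul]
    have h5 := hc0 jj
    rw [← h3, h4] at h5
    simpa [Matrix.mulVec, dotProduct, mul_comm] using h5
  have hcz : c = 0 := by
    obtain ⟨u, hu⟩ := hinv t x hx b
    have h1 : c = ((↑u⁻¹ : Matrix (Fin k) (Fin k) ℝ) *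
        (Matrix.of fun i j : Fin k =>
          fderiv ℝ (fun a' => I i t x a') a (Pi.single j 1))).mulVec c := by
      rw [← hu, Units.inv_mul, Matrix.one_mulVec]
    rw [← Matrix.mulVec_mulVec, hMc, Matrix.mulVec_zero] at h1
    exact h1
  have := congrFun hcz j
  simpa [hc, Ut, Ux, ContinuousLinearMap.pi_apply] using this

/-- the Stäckel transform preserves involutivity of an overdetermined
system of first-order PDEs: if `∂X_A/∂t^B − ∂X_B/∂t^A − [X_A,X_B] = 0` and the Iⱼ are
joint integrals, then the transformed fields X̃_A satisfy the same zero-curvature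
conditions and the Ĩⱼ are joint integrals of the X̃_A. -/
theorem stackel_pde_involution
    (n k d : ℕ) (M : Set (Fin n → ℝ)) (hM : IsOpen M)
    (X : Fin d → (Fin d → ℝ) → (Fin n → ℝ) → (Fin k → ℝ) → (Fin n → ℝ))
    (I : Fin k → (Fin d → ℝ) → (Fin n → ℝ) → (Fin k → ℝ) → ℝ)
    (It : Fin k → (Fin d → ℝ) → (Fin n → ℝ) → (Fin k → ℝ) → ℝ)
    (hX : ∀ A, ContDiff ℝ (⊤ : ℕ∞)
      (fun p : (Fin d → ℝ) × (Fin n → ℝ) × (Fin k → ℝ) => X A p.1 p.2.1 p.2.2))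
    (hI : ∀ i, ContDiff ℝ (⊤ : ℕ∞)
      (fun p : (Fin d → ℝ) × (Fin n → ℝ) × (Fin k → ℝ) => I i p.1 p.2.1 p.2.2))
    (hIt : ∀ i, ContDiff ℝ (⊤ : ℕ∞)
      (fun p : (Fin d → ℝ) × (Fin n → ℝ) × (Fin k → ℝ) => It i p.1 p.2.1 p.2.2))
    -- involutivity: ∂X_A/∂t^B − ∂X_B/∂t^A − [X_A,X_B] = 0
    (hinvol : ∀ A B : Fin d, ∀ t : Fin d → ℝ, ∀ x ∈ M, ∀ a : Fin k → ℝ,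
      fderiv ℝ (fun s => X A s x a) t (Pi.single B 1)
        - fderiv ℝ (fun s => X B s x a) t (Pi.single A 1)
        - (fderiv ℝ (fun y => X B t y a) x (X A t x a)
            - fderiv ℝ (fun y => X A t y a) x (X B t x a)) = 0)
    -- the Iⱼ are joint integrals: ∂Iⱼ/∂t^A + X_A(Iⱼ) = 0
    (hint : ∀ (j : Fin k) (A : Fin d), ∀ t : Fin d → ℝ, ∀ x ∈ M, ∀ a : Fin k → ℝ,
      fderiv ℝ (fun s => I j s x a) t (Pi.single A 1)
        + fderiv ℝ (fun y => I j t y a) x (X A t x a) = 0)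
    -- implicit equations Iᵢ(t,x,Ĩ(t,x,b)) = bᵢ
    (himp : ∀ i, ∀ t : Fin d → ℝ, ∀ x ∈ M, ∀ b : Fin k → ℝ,
      I i t x (fun l => It l t x b) = b i)
    -- invertibility of (∂Iᵢ/∂aⱼ) along a = Ĩ
    (hinv : ∀ t : Fin d → ℝ, ∀ x ∈ M, ∀ b : Fin k → ℝ,
      IsUnit (Matrix.of fun i j : Fin k =>
        fderiv ℝ (fun a => I i t x a) (fun l => It l t x b) (Pi.single j 1))) :
    -- (i) the transformed system is again in involution
    (∀ A B : Fin d, ∀ t : Fin d → ℝ, ∀ x ∈ M, ∀ b : Fin k → ℝ,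
      fderiv ℝ (fun s => X A s x (fun l => It l s x b)) t (Pi.single B 1)
        - fderiv ℝ (fun s => X B s x (fun l => It l s x b)) t (Pi.single A 1)
        - (fderiv ℝ (fun y => X B t y (fun l => It l t y b)) x
              (X A t x (fun l => It l t x b))
            - fderiv ℝ (fun y => X A t y (fun l => It l t y b)) x
              (X B t x (fun l => It l t x b))) = 0)
    -- (ii) each Ĩⱼ is a joint integral of the X̃_A
    ∧ (∀ (j : Fin k) (A : Fin d), ∀ t : Fin d → ℝ, ∀ x ∈ M, ∀ b : Fin k → ℝ,
        fderiv ℝ (fun s => It j s x b) t (Pi.single A 1)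
          + fderiv ℝ (fun y => It j t y b) x
              (X A t x (fun l => It l t x b)) = 0) := by
  have key := stackel_aux n k d M hM X I It hI hIt hint himp hinv
  refine ⟨?_, key⟩
  intro A B t x hx b
  classical
  set a : Fin k → ℝ := fun l => It l t x b with ha
  set q : (Fin d → ℝ) × (Fin n → ℝ) × (Fin k → ℝ) := (t, x, a) with hq
  set XA : Fin n → ℝ := X A t x a with hXAdef
  set XB : Fin n → ℝ := X B t x a with hXBdef
  set eA : Fin d → ℝ := Pi.single A 1 with heA
  set eB : Fin d → ℝ := Pi.single B 1 with heB
  have hItd1 : ∀ l, Differentiable ℝ (fun s => It l s x b) := fun l =>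
    ((hIt l).comp (contDiff_id.prodMk (contDiff_const (c := (x, b))))).differentiable (by simp)
  have hItd2 : ∀ l, Differentiable ℝ (fun y => It l t y b) := fun l =>
    ((hIt l).comp ((contDiff_const (c := t)).prodMk (contDiff_id.prodMk (contDiff_const (c := b))))).differentiable (by simp)
  set Ut : (Fin d → ℝ) →L[ℝ] (Fin k → ℝ) :=
    ContinuousLinearMap.pi (fun l => fderiv ℝ (fun s => It l s x b) t) with hUtdef
  set Ux : (Fin n → ℝ) →L[ℝ] (Fin k → ℝ) :=
    ContinuousLinearMap.pi (fun l => fderiv ℝ (fun y => It l t y b) x) with hUxdef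
  have hUt : HasFDerivAt (fun s => (fun l => It l s x b)) Ut t :=
    hasFDerivAt_pi.2 fun l => ((hItd1 l) t).hasFDerivAt
  have hUx : HasFDerivAt (fun y => (fun l => It l t y b)) Ux x :=
    hasFDerivAt_pi.2 fun l => ((hItd2 l) x).hasFDerivAt
  have hXd : ∀ C, Differentiable ℝ
      (fun p : (Fin d → ℝ) × (Fin n → ℝ) × (Fin k → ℝ) => X C p.1 p.2.1 p.2.2) :=
    fun C => (hX C).differentiable (by simp)
  -- package part (ii) as vector identities
  have hvA : Ut eA + Ux XA = 0 := by
    funext l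
    have := key l A t x hx b
    simpa [Ut, Ux, ContinuousLinearMap.pi_apply] using this
  have hvB : Ut eB + Ux XB = 0 := by
    funext l
    have := key l B t x hx b
    simpa [Ut, Ux, ContinuousLinearMap.pi_apply] using this
  -- chain-rule conversions for the four terms of the goal
  have t1 : fderiv ℝ (fun s => X A s x (fun l => It l s x b)) t eB
      = fderiv ℝ (fun p : (Fin d → ℝ) × (Fin n → ℝ) × (Fin k → ℝ) =>
          X A p.1 p.2.1 p.2.2) q (eB, 0, Ut eB) :=
    fd_chain1 _ (fun s => (fun l => It l s x b)) x Ut hUt ((hXd A) q) eB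
  have t2 : fderiv ℝ (fun s => X B s x (fun l => It l s x b)) t eA
      = fderiv ℝ (fun p : (Fin d → ℝ) × (Fin n → ℝ) × (Fin k → ℝ) =>
          X B p.1 p.2.1 p.2.2) q (eA, 0, Ut eA) :=
    fd_chain1 _ (fun s => (fun l => It l s x b)) x Ut hUt ((hXd B) q) eA
  have t3 : fderiv ℝ (fun y => X B t y (fun l => It l t y b)) x XA
      = fderiv ℝ (fun p : (Fin d → ℝ) × (Fin n → ℝ) × (Fin k → ℝ) =>
          X B p.1 p.2.1 p.2.2) q (0, XA, Ux XA) :=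
    fd_chain2 _ (fun y => (fun l => It l t y b)) t Ux hUx ((hXd B) q) XA
  have t4 : fderiv ℝ (fun y => X A t y (fun l => It l t y b)) x XB
      = fderiv ℝ (fun p : (Fin d → ℝ) × (Fin n → ℝ) × (Fin k → ℝ) =>
          X A p.1 p.2.1 p.2.2) q (0, XB, Ux XB) :=
    fd_chain2 _ (fun y => (fun l => It l t y b)) t Ux hUx ((hXd A) q) XB
  -- the original involutivity, in full-derivative form
  have s1 : fderiv ℝ (fun s => X A s x a) t eB
      = fderiv ℝ (fun p : (Fin d → ℝ) × (Fin n → ℝ) × (Fin k → ℝ) =>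
          X A p.1 p.2.1 p.2.2) q (eB, 0, 0) := fd_slot1 _ x a ((hXd A) q) eB
  have s2 : fderiv ℝ (fun s => X B s x a) t eA
      = fderiv ℝ (fun p : (Fin d → ℝ) × (Fin n → ℝ) × (Fin k → ℝ) =>
          X B p.1 p.2.1 p.2.2) q (eA, 0, 0) := fd_slot1 _ x a ((hXd B) q) eA
  have s3 : fderiv ℝ (fun y => X B t y a) x XA
      = fderiv ℝ (fun p : (Fin d → ℝ) × (Fin n → ℝ) × (Fin k → ℝ) =>
          X B p.1 p.2.1 p.2.2) q (0, XA, 0) := fd_slot2 _ t a ((hXd B) q) XA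
  have s4 : fderiv ℝ (fun y => X A t y a) x XB
      = fderiv ℝ (fun p : (Fin d → ℝ) × (Fin n → ℝ) × (Fin k → ℝ) =>
          X A p.1 p.2.1 p.2.2) q (0, XB, 0) := fd_slot2 _ t a ((hXd A) q) XB
  have H := hinvol A B t x hx a
  rw [s1, s2, s3, s4] at H
  -- zero contributions from the third slot, using part (ii)
  have z1 : fderiv ℝ (fun p : (Fin d → ℝ) × (Fin n → ℝ) × (Fin k → ℝ) =>
        X A p.1 p.2.1 p.2.2) q (0, 0, Ut eB)
      + fderiv ℝ (fun p : (Fin d → ℝ) × (Fin n → ℝ) × (Fin k → ℝ) =>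
        X A p.1 p.2.1 p.2.2) q (0, 0, Ux XB) = 0 := by
    rw [← map_add]
    have h : ((0, 0, Ut eB) : (Fin d → ℝ) × (Fin n → ℝ) × (Fin k → ℝ))
        + (0, 0, Ux XB) = 0 := by simp [Prod.ext_iff, hvB]
    rw [h, map_zero]
  have z2 : fderiv ℝ (fun p : (Fin d → ℝ) × (Fin n → ℝ) × (Fin k → ℝ) =>
        X B p.1 p.2.1 p.2.2) q (0, 0, Ut eA)
      + fderiv ℝ (fun p : (Fin d → ℝ) × (Fin n → ℝ) × (Fin k → ℝ) =>
        X B p.1 p.2.1 p.2.2) q (0, 0, Ux XA) = 0 := by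
    rw [← map_add]
    have h : ((0, 0, Ut eA) : (Fin d → ℝ) × (Fin n → ℝ) × (Fin k → ℝ))
        + (0, 0, Ux XA) = 0 := by simp [Prod.ext_iff, hvA]
    rw [h, map_zero]
  -- split each of the four transformed terms
  have e1 : fderiv ℝ (fun p : (Fin d → ℝ) × (Fin n → ℝ) × (Fin k → ℝ) =>
        X A p.1 p.2.1 p.2.2) q (eB, 0, Ut eB)
      = fderiv ℝ (fun p : (Fin d → ℝ) × (Fin n → ℝ) × (Fin k → ℝ) =>
        X A p.1 p.2.1 p.2.2) q (eB, 0, 0)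
      + fderiv ℝ (fun p : (Fin d → ℝ) × (Fin n → ℝ) × (Fin k → ℝ) =>
        X A p.1 p.2.1 p.2.2) q (0, 0, Ut eB) := by
    rw [← map_add]; congr 1; simp [Prod.ext_iff]
  have e2 : fderiv ℝ (fun p : (Fin d → ℝ) × (Fin n → ℝ) × (Fin k → ℝ) =>
        X B p.1 p.2.1 p.2.2) q (eA, 0, Ut eA)
      = fderiv ℝ (fun p : (Fin d → ℝ) × (Fin n → ℝ) × (Fin k → ℝ) =>
        X B p.1 p.2.1 p.2.2) q (eA, 0, 0)
      + fderiv ℝ (fun p : (Fin d → ℝ) × (Fin n → ℝ) × (Fin k → ℝ) =>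
        X B p.1 p.2.1 p.2.2) q (0, 0, Ut eA) := by
    rw [← map_add]; congr 1; simp [Prod.ext_iff]
  have e3 : fderiv ℝ (fun p : (Fin d → ℝ) × (Fin n → ℝ) × (Fin k → ℝ) =>
        X B p.1 p.2.1 p.2.2) q (0, XA, Ux XA)
      = fderiv ℝ (fun p : (Fin d → ℝ) × (Fin n → ℝ) × (Fin k → ℝ) =>
        X B p.1 p.2.1 p.2.2) q (0, XA, 0)
      + fderiv ℝ (fun p : (Fin d → ℝ) × (Fin n → ℝ) × (Fin k → ℝ) =>
        X B p.1 p.2.1 p.2.2) q (0, 0, Ux XA) := by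
    rw [← map_add]; congr 1; simp [Prod.ext_iff]
  have e4 : fderiv ℝ (fun p : (Fin d → ℝ) × (Fin n → ℝ) × (Fin k → ℝ) =>
        X A p.1 p.2.1 p.2.2) q (0, XB, Ux XB)
      = fderiv ℝ (fun p : (Fin d → ℝ) × (Fin n → ℝ) × (Fin k → ℝ) =>
        X A p.1 p.2.1 p.2.2) q (0, XB, 0)
      + fderiv ℝ (fun p : (Fin d → ℝ) × (Fin n → ℝ) × (Fin k → ℝ) =>
        X A p.1 p.2.1 p.2.2) q (0, 0, Ux XB) := by
    rw [← map_add]; congr 1; simp [Prod.ext_iff]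
  rw [t1, t2, t3, t4, e1, e2, e3, e4]
  linear_combination H + z1 - z2
end

section
/- Chain-rule symmetry identity for the Stäckel substitution: let X, Y be smooth parameter-dependent vector fields on open M ⊆ ℝⁿ, Ĩ : ℝ × M × ℝᵏ → ℝᵏ smooth, X̃, Ỹ the substituted fields (a replaced by Ĩ(t,x,b)). Suppose each Ĩ_j satisfies ∂Ĩ_j/∂t + X̃(Ĩ_j) = 0. Then ∂Ỹ/∂t + [X̃,Ỹ] = (∂Y/∂t + [X,Y] − Σ_{j=1}^k Ỹ(Ĩ_j)·∂X/∂a_j)|_{a=Ĩ}, where Ỹ(Ĩ_j) = Σ_α Ỹ^α ∂Ĩ_j/∂x^α. In particular if ∂Y/∂t + [X,Y] = 0 and Ỹ(Ĩ_j) = 0 for all j, then ∂Ỹ/∂t + [X̃,Ỹ] = 0. -/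
lemma clm_pi_sum {k : ℕ} {E : Type*} [NormedAddCommGroup E] [NormedSpace ℝ E]
    (L : (Fin k → ℝ) →L[ℝ] E) (d : Fin k → ℝ) :
    L d = ∑ j, d j • L (Pi.single j 1) := by
  conv_lhs => rw [← Finset.univ_sum_single d]
  rw [map_sum]
  refine Finset.sum_congr rfl fun j _ => ?_
  rw [← map_smul]
  congr 1
  rw [← Pi.single_smul, smul_eq_mul, mul_one]

/-- chain-rule symmetry identity for the Stäckel substitution: if each Ĩⱼ
satisfies `∂Ĩⱼ/∂t + X̃(Ĩⱼ) = 0`, then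
`∂Ỹ/∂t + [X̃,Ỹ] = (∂Y/∂t + [X,Y] − Σⱼ Ỹ(Ĩⱼ)·∂X/∂aⱼ)|_{a=Ĩ}`; in particular if
`∂Y/∂t + [X,Y] = 0` and `Ỹ(Ĩⱼ) = 0` for all j then `∂Ỹ/∂t + [X̃,Ỹ] = 0`. -/
theorem stackel_symmetry_chain_rule
    (n k : ℕ) (M : Set (Fin n → ℝ)) (hM : IsOpen M)
    (X Y : ℝ → (Fin n → ℝ) → (Fin k → ℝ) → (Fin n → ℝ))
    (It : Fin k → ℝ → (Fin n → ℝ) → (Fin k → ℝ) → ℝ)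
    (hX : ContDiff ℝ (⊤ : ℕ∞) (fun p : ℝ × (Fin n → ℝ) × (Fin k → ℝ) => X p.1 p.2.1 p.2.2))
    (hY : ContDiff ℝ (⊤ : ℕ∞) (fun p : ℝ × (Fin n → ℝ) × (Fin k → ℝ) => Y p.1 p.2.1 p.2.2))
    (hIt : ∀ i, ContDiff ℝ (⊤ : ℕ∞) (fun p : ℝ × (Fin n → ℝ) × (Fin k → ℝ) => It i p.1 p.2.1 p.2.2))
    -- each Ĩⱼ is an integral of motion of X̃
    (hItint : ∀ j t, ∀ x ∈ M, ∀ b : Fin k → ℝ,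
      deriv (fun s => It j s x b) t
        + fderiv ℝ (fun y => It j t y b) x (X t x (fun l => It l t x b)) = 0) :
    -- (i) the identity ∂Ỹ/∂t + [X̃,Ỹ] = (∂Y/∂t + [X,Y] − Σⱼ Ỹ(Ĩⱼ)·∂X/∂aⱼ)|_{a=Ĩ}
    (∀ t, ∀ x ∈ M, ∀ b : Fin k → ℝ,
      deriv (fun s => Y s x (fun l => It l s x b)) t
        + (fderiv ℝ (fun y => Y t y (fun l => It l t y b)) x
              (X t x (fun l => It l t x b))
            - fderiv ℝ (fun y => X t y (fun l => It l t y b)) x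
              (Y t x (fun l => It l t x b)))
      = deriv (fun s => Y s x (fun l => It l t x b)) t
          + (fderiv ℝ (fun y => Y t y (fun l => It l t x b)) x
                (X t x (fun l => It l t x b))
              - fderiv ℝ (fun y => X t y (fun l => It l t x b)) x
                (Y t x (fun l => It l t x b)))
          - ∑ j : Fin k,
              (fderiv ℝ (fun y => It j t y b) x (Y t x (fun l => It l t x b)))
                • fderiv ℝ (fun a => X t x a) (fun l => It l t x b) (Pi.single j 1))
    -- (ii) in particular: a symmetry Y with Ỹ(Ĩⱼ) = 0 yields a symmetry Ỹ of X̃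
    ∧ ((∀ t, ∀ x ∈ M, ∀ a : Fin k → ℝ,
          deriv (fun s => Y s x a) t
            + (fderiv ℝ (fun y => Y t y a) x (X t x a)
                - fderiv ℝ (fun y => X t y a) x (Y t x a)) = 0) →
        (∀ j t, ∀ x ∈ M, ∀ b : Fin k → ℝ,
          fderiv ℝ (fun y => It j t y b) x (Y t x (fun l => It l t x b)) = 0) →
        ∀ t, ∀ x ∈ M, ∀ b : Fin k → ℝ,
          deriv (fun s => Y s x (fun l => It l s x b)) t
            + (fderiv ℝ (fun y => Y t y (fun l => It l t y b)) x
                  (X t x (fun l => It l t x b))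
                - fderiv ℝ (fun y => X t y (fun l => It l t y b)) x
                  (Y t x (fun l => It l t x b))) = 0) := by
  have main : ∀ t, ∀ x ∈ M, ∀ b : Fin k → ℝ,
      deriv (fun s => Y s x (fun l => It l s x b)) t
        + (fderiv ℝ (fun y => Y t y (fun l => It l t y b)) x
              (X t x (fun l => It l t x b))
            - fderiv ℝ (fun y => X t y (fun l => It l t y b)) x
              (Y t x (fun l => It l t x b)))
      = deriv (fun s => Y s x (fun l => It l t x b)) t
          + (fderiv ℝ (fun y => Y t y (fun l => It l t x b)) x
                (X t x (fun l => It l t x b))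
              - fderiv ℝ (fun y => X t y (fun l => It l t x b)) x
                (Y t x (fun l => It l t x b)))
          - ∑ j : Fin k,
              (fderiv ℝ (fun y => It j t y b) x (Y t x (fun l => It l t x b)))
                • fderiv ℝ (fun a => X t x a) (fun l => It l t x b) (Pi.single j 1) := by
    intro t x hx b
    set a0 : Fin k → ℝ := fun l => It l t x b with ha0
    -- abbreviations
    set Xt : Fin n → ℝ := X t x a0 with hXt
    set Yt : Fin n → ℝ := Y t x a0 with hYt
    have hYd : DifferentiableAt ℝ
        (fun p : ℝ × (Fin n → ℝ) × (Fin k → ℝ) => Y p.1 p.2.1 p.2.2) (t, x, a0) :=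
      (hY.differentiable (by simp)) _
    have hXd : DifferentiableAt ℝ
        (fun p : ℝ × (Fin n → ℝ) × (Fin k → ℝ) => X p.1 p.2.1 p.2.2) (t, x, a0) :=
      (hX.differentiable (by simp)) _
    set DF := fderiv ℝ (fun p : ℝ × (Fin n → ℝ) × (Fin k → ℝ) => Y p.1 p.2.1 p.2.2) (t, x, a0)
      with hDFdef
    set DG := fderiv ℝ (fun p : ℝ × (Fin n → ℝ) × (Fin k → ℝ) => X p.1 p.2.1 p.2.2) (t, x, a0)
      with hDGdef
    have hF : HasFDerivAt
        (fun p : ℝ × (Fin n → ℝ) × (Fin k → ℝ) => Y p.1 p.2.1 p.2.2) DF (t, x, a0) :=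
      hYd.hasFDerivAt
    have hG : HasFDerivAt
        (fun p : ℝ × (Fin n → ℝ) × (Fin k → ℝ) => X p.1 p.2.1 p.2.2) DG (t, x, a0) :=
      hXd.hasFDerivAt
    -- time derivatives of It components
    have hdlt : ∀ l : Fin k, DifferentiableAt ℝ (fun s => It l s x b) t := by
      intro l
      exact (((hIt l).differentiable (by simp)).comp
        (differentiable_id.prodMk (differentiable_const (x, b)))) t
    set A' : Fin k → ℝ := fun l => deriv (fun s => It l s x b) t with hA'
    have hA : HasDerivAt (fun s l => It l s x b) A' t :=
      hasDerivAt_pi.mpr fun l => (hdlt l).hasDerivAt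
    -- space derivatives of It components
    have hdbx : ∀ j : Fin k, DifferentiableAt ℝ (fun y => It j t y b) x := by
      intro j
      exact (((hIt j).differentiable (by simp)).comp
        ((differentiable_const t).prodMk (differentiable_id.prodMk (differentiable_const b)))) x
    set DI : Fin k → ((Fin n → ℝ) →L[ℝ] ℝ) := fun j => fderiv ℝ (fun y => It j t y b) x with hDI
    have hB : HasFDerivAt (fun y l => It l t y b) (ContinuousLinearMap.pi DI) x :=
      hasFDerivAt_pi.mpr fun j => (hdbx j).hasFDerivAt
    -- 1) deriv (fun s => Y s x (Ĩ s)) t = DF (1, 0, A')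
    have e1 : deriv (fun s => Y s x (fun l => It l s x b)) t = DF (1, 0, A') := by
      have hg : HasDerivAt (fun s : ℝ => (s, x, fun l => It l s x b))
          ((1 : ℝ), (0 : Fin n → ℝ), A') t :=
        HasDerivAt.prodMk (hasDerivAt_id t) (HasDerivAt.prodMk (hasDerivAt_const t x) hA)
      exact (hF.comp_hasDerivAt t hg).deriv
    -- 2) deriv (fun s => Y s x a0) t = DF (1, 0, 0)
    have e2 : deriv (fun s => Y s x a0) t = DF (1, 0, 0) := by
      have hg : HasDerivAt (fun s : ℝ => (s, x, a0))
          ((1 : ℝ), (0 : Fin n → ℝ), (0 : Fin k → ℝ)) t :=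
        HasDerivAt.prodMk (hasDerivAt_id t) (HasDerivAt.prodMk (hasDerivAt_const t x) (hasDerivAt_const t a0))
      exact (hF.comp_hasDerivAt t hg).deriv
    -- x-derivative plumbing
    have hh : HasFDerivAt (fun y : Fin n → ℝ => ((t : ℝ), y, fun l => It l t y b))
        ((0 : (Fin n → ℝ) →L[ℝ] ℝ).prod
          ((ContinuousLinearMap.id ℝ (Fin n → ℝ)).prod (ContinuousLinearMap.pi DI))) x :=
      HasFDerivAt.prodMk (hasFDerivAt_const t x) (HasFDerivAt.prodMk (hasFDerivAt_id x) hB)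
    have hh0 : HasFDerivAt (fun y : Fin n → ℝ => ((t : ℝ), y, a0))
        ((0 : (Fin n → ℝ) →L[ℝ] ℝ).prod
          ((ContinuousLinearMap.id ℝ (Fin n → ℝ)).prod (0 : (Fin n → ℝ) →L[ℝ] (Fin k → ℝ)))) x :=
      HasFDerivAt.prodMk (hasFDerivAt_const t x) (HasFDerivAt.prodMk (hasFDerivAt_id x) (hasFDerivAt_const a0 x))
    -- 3) fderiv (fun y => Y t y (Ĩ y)) x Xt = DF (0, Xt, fun j => DI j Xt)
    have e3 : fderiv ℝ (fun y => Y t y (fun l => It l t y b)) x Xt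
        = DF (0, Xt, fun j => DI j Xt) := by
      have := (hF.comp x hh).fderiv
      rw [show (fun y => Y t y (fun l => It l t y b))
          = ((fun p : ℝ × (Fin n → ℝ) × (Fin k → ℝ) => Y p.1 p.2.1 p.2.2) ∘
            fun y : Fin n → ℝ => ((t : ℝ), y, fun l => It l t y b)) from rfl, this]
      simp [ContinuousLinearMap.pi_apply]
    have e4 : fderiv ℝ (fun y => X t y (fun l => It l t y b)) x Yt
        = DG (0, Yt, fun j => DI j Yt) := by
      have := (hG.comp x hh).fderiv
      rw [show (fun y => X t y (fun l => It l t y b))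
          = ((fun p : ℝ × (Fin n → ℝ) × (Fin k → ℝ) => X p.1 p.2.1 p.2.2) ∘
            fun y : Fin n → ℝ => ((t : ℝ), y, fun l => It l t y b)) from rfl, this]
      simp [ContinuousLinearMap.pi_apply]
    have e5 : fderiv ℝ (fun y => Y t y a0) x Xt = DF (0, Xt, 0) := by
      have := (hF.comp x hh0).fderiv
      rw [show (fun y => Y t y a0)
          = ((fun p : ℝ × (Fin n → ℝ) × (Fin k → ℝ) => Y p.1 p.2.1 p.2.2) ∘
            fun y : Fin n → ℝ => ((t : ℝ), y, a0)) from rfl, this]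
      simp
    have e6 : fderiv ℝ (fun y => X t y a0) x Yt = DG (0, Yt, 0) := by
      have := (hG.comp x hh0).fderiv
      rw [show (fun y => X t y a0)
          = ((fun p : ℝ × (Fin n → ℝ) × (Fin k → ℝ) => X p.1 p.2.1 p.2.2) ∘
            fun y : Fin n → ℝ => ((t : ℝ), y, a0)) from rfl, this]
      simp
    -- 7) fderiv in a
    have e7 : ∀ v : Fin k → ℝ, fderiv ℝ (fun a => X t x a) a0 v = DG (0, 0, v) := by
      intro v
      have hm : HasFDerivAt (fun a : Fin k → ℝ => ((t : ℝ), x, a))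
          ((0 : (Fin k → ℝ) →L[ℝ] ℝ).prod
            ((0 : (Fin k → ℝ) →L[ℝ] (Fin n → ℝ)).prod (ContinuousLinearMap.id ℝ (Fin k → ℝ)))) a0 :=
        HasFDerivAt.prodMk (hasFDerivAt_const t a0) (HasFDerivAt.prodMk (hasFDerivAt_const x a0) (hasFDerivAt_id a0))
      have := (hG.comp a0 hm).fderiv
      rw [show (fun a : Fin k → ℝ => X t x a)
          = ((fun p : ℝ × (Fin n → ℝ) × (Fin k → ℝ) => X p.1 p.2.1 p.2.2) ∘
            fun a : Fin k → ℝ => ((t : ℝ), x, a)) from rfl, this]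
      simp
    -- integral-of-motion: A' + DI _ Xt = 0
    have hint : (A' + fun j => DI j Xt) = 0 := by
      funext j
      have := hItint j t x hx b
      simpa [hA', hDI, hXt, ha0] using this
    -- algebra
    rw [e1, e2, e3, e4, e5, e6]
    have hpi : ∀ v : Fin n → ℝ, (ContinuousLinearMap.pi DI) v = fun j => DI j v :=
      fun v => funext fun j => rfl
    set L : (Fin k → ℝ) →L[ℝ] (Fin n → ℝ) :=
      DG.comp ((ContinuousLinearMap.inr ℝ ℝ ((Fin n → ℝ) × (Fin k → ℝ))).comp
        (ContinuousLinearMap.inr ℝ (Fin n → ℝ) (Fin k → ℝ))) with hLdef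
    have hL : ∀ v : Fin k → ℝ, L v = DG (0, 0, v) := fun v => rfl
    have hsum : (∑ j : Fin k, (DI j Yt) • fderiv ℝ (fun a => X t x a) a0 (Pi.single j 1))
        = DG (0, 0, fun j => DI j Yt) := by
      calc (∑ j : Fin k, (DI j Yt) • fderiv ℝ (fun a => X t x a) a0 (Pi.single j 1))
          = ∑ j : Fin k, (DI j Yt) • L (Pi.single j 1) := by
            refine Finset.sum_congr rfl fun j _ => ?_
            rw [e7, hL]
        _ = L (fun j => DI j Yt) := (clm_pi_sum L _).symm
        _ = DG (0, 0, fun j => DI j Yt) := hL _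
    have key1 : DF (1, 0, A') + DF (0, Xt, fun j => DI j Xt)
        = DF (1, 0, 0) + DF (0, Xt, 0) := by
      rw [← map_add, ← map_add]
      congr 1
      simp [Prod.mk_add_mk, hint]
    have key2 : DG (0, Yt, fun j => DI j Yt)
        = DG (0, Yt, 0) + DG (0, 0, fun j => DI j Yt) := by
      rw [← map_add]
      simp [Prod.mk_add_mk]
    rw [hsum, key2]
    calc DF (1, 0, A') + (DF (0, Xt, fun j => DI j Xt)
          - (DG (0, Yt, 0) + DG (0, 0, fun j => DI j Yt)))
        = (DF (1, 0, A') + DF (0, Xt, fun j => DI j Xt))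
            - DG (0, Yt, 0) - DG (0, 0, fun j => DI j Yt) := by abel
      _ = (DF (1, 0, 0) + DF (0, Xt, 0))
            - DG (0, Yt, 0) - DG (0, 0, fun j => DI j Yt) := by rw [key1]
      _ = DF (1, 0, 0) + (DF (0, Xt, 0) - DG (0, Yt, 0)) - DG (0, 0, fun j => DI j Yt) := by
          abel
  refine ⟨main, ?_⟩
  intro hsym hint0 t x hx b
  rw [main t x hx b]
  have h0 := hsym t x hx (fun l => It l t x b)
  have hs : ∀ j : Fin k,
      fderiv ℝ (fun y => It j t y b) x (Y t x (fun l => It l t x b)) = 0 :=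
    fun j => hint0 j t x hx b
  simp only [hs, zero_smul, Finset.sum_const_zero, sub_zero]
  exact h0
end
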